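/- arXiv:1501.02356 — 12 statements merged into one kernel-verified Lean document; each statement's English description precedes it below -/
import Mathlib

section
/- For t ∈ [-1,1], t ≠ 0, the functions K_t(x,y) = t·x^t·(x-y)/(x^t - y^t) and L_t(x,y) = t·y^t·(x-y)/(x^t - y^t) (extended by K_t(x,x) = L_t(x,x) = x) satisfy the invariance equation L(K_t(x,y), L_t(x,y)) = L(x,y) for all x, y > 0, where L is the logarithmic mean. -/
/-!
Off the diagonal, `K_t(x,y) = c x^t` and `L_t(x,y) = c y^t` with `c = t(x-y)/(x^t-y^t)`.
The logarithmic mean is homogeneous of degree one, and `L(x^t, y^t) = (x^t-y^t)/(t(log x - log y))`,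
so `L(K_t, L_t) = c L(x^t, y^t) = (x-y)/(log x - log y)`.
-/

noncomputable def logMean (x y : ℝ) : ℝ :=
  if x = y then x else (x - y) / (Real.log x - Real.log y)

lemma logMean_of_ne {a b : ℝ} (hab : a ≠ b) :
    logMean a b = (a - b) / (Real.log a - Real.log b) :=
  if_neg hab

lemma logMean_mul_mul {c a b : ℝ} (hc : c ≠ 0) (ha : a ≠ 0) (hb : b ≠ 0) :
    logMean (c * a) (c * b) = c * logMean a b := by
  by_cases hab : a = b
  · simp [logMean, hab]
  · have hcab : c * a ≠ c * b := fun h => hab (mul_left_cancel₀ hc h)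
    rw [logMean_of_ne hcab, logMean_of_ne hab, Real.log_mul hc ha, Real.log_mul hc hb]
    ring_nf

lemma logMean_rpow_rpow {a b t : ℝ} (ha : 0 < a) (hb : 0 < b) (ht : t ≠ 0) (hab : a ≠ b) :
    logMean (a ^ t) (b ^ t) = (a ^ t - b ^ t) / (t * (Real.log a - Real.log b)) := by
  have habt : a ^ t ≠ b ^ t := fun h => hab ((Real.rpow_left_inj ha.le hb.le ht).mp h)
  rw [logMean_of_ne habt, Real.log_rpow ha, Real.log_rpow hb, mul_sub]

theorem L_invariance_general (t : ℝ) (ht0 : t ≠ 0)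
    (K L : ℝ → ℝ → ℝ)
    (hK : ∀ x y : ℝ, K x y = if x = y then x else t * x ^ t * (x - y) / (x ^ t - y ^ t))
    (hL : ∀ x y : ℝ, L x y = if x = y then x else t * y ^ t * (x - y) / (x ^ t - y ^ t))
    (x y : ℝ) (hx : 0 < x) (hy : 0 < y) :
    logMean (K x y) (L x y) = logMean x y := by
  by_cases hxy : x = y
  · simp [hK, hL, hxy]
  have hxyt : x ^ t - y ^ t ≠ 0 :=
    sub_ne_zero.mpr fun h => hxy ((Real.rpow_left_inj hx.le hy.le ht0).mp h)
  set c := t * (x - y) / (x ^ t - y ^ t)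
  have hc : c ≠ 0 := div_ne_zero (mul_ne_zero ht0 (sub_ne_zero.mpr hxy)) hxyt
  have hKc : K x y = c * x ^ t := by rw [hK, if_neg hxy]; ring
  have hLc : L x y = c * y ^ t := by rw [hL, if_neg hxy]; ring
  rw [hKc, hLc, logMean_mul_mul hc (Real.rpow_pos_of_pos hx t).ne' (Real.rpow_pos_of_pos hy t).ne',
    logMean_rpow_rpow hx hy ht0 hxy, logMean_of_ne hxy]
  simp only [c]
  field_simp

theorem L_invariance (t : ℝ) (ht : t ∈ Set.Icc (-1 : ℝ) 1) (ht0 : t ≠ 0)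
    (K L : ℝ → ℝ → ℝ)
    (hK : ∀ x y : ℝ, K x y = if x = y then x else t * x ^ t * (x - y) / (x ^ t - y ^ t))
    (hL : ∀ x y : ℝ, L x y = if x = y then x else t * y ^ t * (x - y) / (x ^ t - y ^ t))
    (x y : ℝ) (hx : 0 < x) (hy : 0 < y) :
    logMean (K x y) (L x y) = logMean x y :=
  L_invariance_general t ht0 K L hK hL x y hx hy
end

section
/- For t ∈ (0,1] and x, y > 0 with x ≠ y, the value K_t(x,y) = t·x^t·(x-y)/(x^t - y^t) lies between min(x,y) and max(x,y); i.e., K_t is a mean on the positive reals. -/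
/-! By the mean value theorem, `x ^ t - y ^ t = t * c ^ (t - 1) * (x - y)` for some `c` strictly
between `x` and `y`, so `K_t(x, y) = x ^ t * c ^ (1 - t)` is a weighted geometric mean of two
points of `[min x y, max x y]`, hence lies in that interval when `0 ≤ t ≤ 1`. -/

open Set

namespace Real

theorem exists_mem_Ioo_rpow_sub_rpow_eq {a b : ℝ} (t : ℝ) (ha : 0 < a) (hab : a < b) :
    ∃ c ∈ Ioo a b, b ^ t - a ^ t = t * c ^ (t - 1) * (b - a) := by
  have hderiv : ∀ x ∈ Icc a b, HasDerivAt (fun x : ℝ ↦ x ^ t) (t * x ^ (t - 1)) x :=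
    fun x hx ↦ hasDerivAt_rpow_const (Or.inl (ha.trans_le hx.1).ne')
  obtain ⟨c, hc, hslope⟩ := exists_hasDerivAt_eq_slope (fun x : ℝ ↦ x ^ t)
    (fun x ↦ t * x ^ (t - 1)) hab
    (fun x hx ↦ (hderiv x hx).continuousAt.continuousWithinAt)
    (fun x hx ↦ hderiv x (Ioo_subset_Icc_self hx))
  refine ⟨c, hc, ?_⟩
  rw [hslope, div_mul_cancel₀ _ (sub_pos.2 hab).ne']

theorem exists_mem_Ioo_min_max_rpow_sub_rpow_eq {x y : ℝ} (t : ℝ) (hx : 0 < x) (hy : 0 < y)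
    (hxy : x ≠ y) :
    ∃ c ∈ Ioo (min x y) (max x y), x ^ t - y ^ t = t * c ^ (t - 1) * (x - y) := by
  rcases hxy.lt_or_gt with hlt | hgt
  · obtain ⟨c, hc, h⟩ := exists_mem_Ioo_rpow_sub_rpow_eq t hx hlt
    rw [min_eq_left hlt.le, max_eq_right hlt.le]
    exact ⟨c, hc, by linear_combination -h⟩
  · obtain ⟨c, hc, h⟩ := exists_mem_Ioo_rpow_sub_rpow_eq t hy hgt
    rw [min_eq_right hgt.le, max_eq_left hgt.le]
    exact ⟨c, hc, h⟩

theorem rpow_mul_rpow_one_sub_mem_Icc {m M a b t : ℝ} (hm : 0 ≤ m) (ha : a ∈ Icc m M)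
    (hb : b ∈ Icc m M) (ht₀ : 0 ≤ t) (ht₁ : t ≤ 1) : a ^ t * b ^ (1 - t) ∈ Icc m M := by
  have hsplit : ∀ z : ℝ, 0 ≤ z → z = z ^ t * z ^ (1 - t) := fun z hz ↦ by
    rw [← rpow_add' hz (by norm_num), add_sub_cancel, rpow_one]
  have ha₀ : 0 ≤ a := hm.trans ha.1
  have hb₀ : 0 ≤ b := hm.trans hb.1
  have hM : 0 ≤ M := ha₀.trans ha.2
  have ht₁' : 0 ≤ 1 - t := sub_nonneg.2 ht₁
  constructor
  · calc m = m ^ t * m ^ (1 - t) := hsplit m hm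
      _ ≤ a ^ t * b ^ (1 - t) := mul_le_mul (rpow_le_rpow hm ha.1 ht₀)
          (rpow_le_rpow hm hb.1 ht₁') (by positivity) (by positivity)
  · calc a ^ t * b ^ (1 - t) ≤ M ^ t * M ^ (1 - t) := mul_le_mul (rpow_le_rpow ha₀ ha.2 ht₀)
          (rpow_le_rpow hb₀ hb.2 ht₁') (rpow_nonneg hb₀ _) (by positivity)
      _ = M := (hsplit M hM).symm

end Real

theorem Kt_is_mean (t : ℝ) (ht : t ∈ Set.Ioc (0 : ℝ) 1)
    (x y : ℝ) (hx : 0 < x) (hy : 0 < y) (hxy : x ≠ y) :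
    min x y ≤ t * x ^ t * (x - y) / (x ^ t - y ^ t) ∧
      t * x ^ t * (x - y) / (x ^ t - y ^ t) ≤ max x y := by
  obtain ⟨ht₀, ht₁⟩ := ht
  obtain ⟨c, hc, hslope⟩ := Real.exists_mem_Ioo_min_max_rpow_sub_rpow_eq t hx hy hxy
  have hc₀ : 0 < c := (lt_min hx hy).trans hc.1
  have hK : t * x ^ t * (x - y) / (x ^ t - y ^ t) = x ^ t * c ^ (1 - t) := by
    have hxy' : x - y ≠ 0 := sub_ne_zero.2 hxy
    rw [hslope, show 1 - t = -(t - 1) by ring, Real.rpow_neg hc₀.le]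
    field_simp [ht₀.ne', (Real.rpow_pos_of_pos hc₀ (t - 1)).ne']
  rw [hK]
  exact Real.rpow_mul_rpow_one_sub_mem_Icc (le_min hx.le hy.le) ⟨min_le_left x y, le_max_left x y⟩
    (Ioo_subset_Icc_self hc) ht₀.le ht₁
end

section
/- Let M : ℝ₊² → ℝ₊ be a homogeneous, symmetric, monotone mean. Then for every t ∈ (-1,1), the function M_t(x,y) = (M(x,y)/M(x^t,y^t))^{1/(1-t)} is a mean, i.e., min(x,y) ≤ M_t(x,y) ≤ max(x,y) for all x, y > 0. -/
/-! Write `m` and `m'` for the minimum and maximum of `x, y` and `s = 1 - t > 0`. Since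
`m ^ s * z ^ t ≤ z ≤ m' ^ s * z ^ t` for `z ∈ {x, y}`, monotonicity and homogeneity give
`m ^ s * M (x ^ t) (y ^ t) ≤ M x y ≤ m' ^ s * M (x ^ t) (y ^ t)`; dividing by the positive
number `M (x ^ t) (y ^ t)` and taking `s`-th roots yields the claim. -/

open Real

lemma Real.rpow_one_sub_mul_rpow_le {c z : ℝ} (t : ℝ) (hc : 0 < c) (hcz : c ≤ z) (ht : t ≤ 1) :
    c ^ (1 - t) * z ^ t ≤ z :=
  calc c ^ (1 - t) * z ^ t ≤ z ^ (1 - t) * z ^ t :=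
        mul_le_mul_of_nonneg_right (rpow_le_rpow hc.le hcz (by linarith))
          (rpow_nonneg (hc.le.trans hcz) t)
    _ = z := by rw [← rpow_add (hc.trans_le hcz)]; simp

lemma Real.le_rpow_one_sub_mul_rpow {c z : ℝ} (t : ℝ) (hz : 0 < z) (hzc : z ≤ c) (ht : t ≤ 1) :
    z ≤ c ^ (1 - t) * z ^ t :=
  calc z = z ^ (1 - t) * z ^ t := by rw [← rpow_add hz]; simp
    _ ≤ c ^ (1 - t) * z ^ t :=
        mul_le_mul_of_nonneg_right (rpow_le_rpow hz.le hzc (by linarith)) (by positivity)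

lemma min_rpow_one_sub_mul_le {M : ℝ → ℝ → ℝ}
    (hhom : ∀ l x y : ℝ, 0 < l → 0 < x → 0 < y → M (l * x) (l * y) = l * M x y)
    (hmono : ∀ x₁ y₁ x₂ y₂ : ℝ, 0 < x₁ → 0 < y₁ → x₁ ≤ x₂ → y₁ ≤ y₂ → M x₁ y₁ ≤ M x₂ y₂)
    {t : ℝ} (ht : t ≤ 1) {x y : ℝ} (hx : 0 < x) (hy : 0 < y) :
    min x y ^ (1 - t) * M (x ^ t) (y ^ t) ≤ M x y := by
  have hm : 0 < min x y ^ (1 - t) := rpow_pos_of_pos (lt_min hx hy) _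
  rw [← hhom _ _ _ hm (rpow_pos_of_pos hx t) (rpow_pos_of_pos hy t)]
  exact hmono _ _ _ _ (by positivity) (by positivity)
    (rpow_one_sub_mul_rpow_le t (lt_min hx hy) (min_le_left x y) ht)
    (rpow_one_sub_mul_rpow_le t (lt_min hx hy) (min_le_right x y) ht)

lemma le_max_rpow_one_sub_mul {M : ℝ → ℝ → ℝ}
    (hhom : ∀ l x y : ℝ, 0 < l → 0 < x → 0 < y → M (l * x) (l * y) = l * M x y)
    (hmono : ∀ x₁ y₁ x₂ y₂ : ℝ, 0 < x₁ → 0 < y₁ → x₁ ≤ x₂ → y₁ ≤ y₂ → M x₁ y₁ ≤ M x₂ y₂)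
    {t : ℝ} (ht : t ≤ 1) {x y : ℝ} (hx : 0 < x) (hy : 0 < y) :
    M x y ≤ max x y ^ (1 - t) * M (x ^ t) (y ^ t) := by
  have hm : 0 < max x y ^ (1 - t) := rpow_pos_of_pos (lt_max_of_lt_left hx) _
  rw [← hhom _ _ _ hm (rpow_pos_of_pos hx t) (rpow_pos_of_pos hy t)]
  exact hmono _ _ _ _ hx hy
    (le_rpow_one_sub_mul_rpow t hx (le_max_left x y) ht)
    (le_rpow_one_sub_mul_rpow t hy (le_max_right x y) ht)

theorem Mt_is_mean_general (M : ℝ → ℝ → ℝ)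
    (hmean : ∀ x y : ℝ, 0 < x → 0 < y → min x y ≤ M x y ∧ M x y ≤ max x y)
    (hhom : ∀ l x y : ℝ, 0 < l → 0 < x → 0 < y → M (l * x) (l * y) = l * M x y)
    (hmono : ∀ x₁ y₁ x₂ y₂ : ℝ, 0 < x₁ → 0 < y₁ → x₁ ≤ x₂ → y₁ ≤ y₂ → M x₁ y₁ ≤ M x₂ y₂)
    (t : ℝ) (ht : t ∈ Set.Ioo (-1 : ℝ) 1) (x y : ℝ) (hx : 0 < x) (hy : 0 < y) :
    min x y ≤ (M x y / M (x ^ t) (y ^ t)) ^ (1 / (1 - t)) ∧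
      (M x y / M (x ^ t) (y ^ t)) ^ (1 / (1 - t)) ≤ max x y := by
  obtain ⟨-, ht1⟩ := ht
  have hxt := rpow_pos_of_pos hx t
  have hyt := rpow_pos_of_pos hy t
  have hpos : 0 < M (x ^ t) (y ^ t) :=
    (lt_min hxt hyt).trans_le (hmean _ _ hxt hyt).1
  have hlower := (le_div_iff₀ hpos).2 (min_rpow_one_sub_mul_le hhom hmono ht1.le hx hy)
  have hupper := (div_le_iff₀ hpos).2 (le_max_rpow_one_sub_mul hhom hmono ht1.le hx hy)
  have hs : 0 < 1 - t := by linarith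
  rw [one_div, le_rpow_inv_iff_of_pos (lt_min hx hy).le (hlower.trans' (by positivity)) hs,
    rpow_inv_le_iff_of_pos (hlower.trans' (by positivity)) (lt_max_of_lt_left hx).le hs]
  exact ⟨hlower, hupper⟩

theorem Mt_is_mean (M : ℝ → ℝ → ℝ)
    (hmean : ∀ x y : ℝ, 0 < x → 0 < y → min x y ≤ M x y ∧ M x y ≤ max x y)
    (hhom : ∀ l x y : ℝ, 0 < l → 0 < x → 0 < y → M (l * x) (l * y) = l * M x y)
    (hsym : ∀ x y : ℝ, 0 < x → 0 < y → M x y = M y x)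
    (hmono : ∀ x₁ y₁ x₂ y₂ : ℝ, 0 < x₁ → 0 < y₁ → x₁ ≤ x₂ → y₁ ≤ y₂ → M x₁ y₁ ≤ M x₂ y₂)
    (t : ℝ) (ht : t ∈ Set.Ioo (-1 : ℝ) 1) (x y : ℝ) (hx : 0 < x) (hy : 0 < y) :
    min x y ≤ (M x y / M (x ^ t) (y ^ t)) ^ (1 / (1 - t)) ∧
      (M x y / M (x ^ t) (y ^ t)) ^ (1 / (1 - t)) ≤ max x y :=
  Mt_is_mean_general M hmean hhom hmono t ht x y hx hy
end

section
/- Let M : ℝ₊² → ℝ₊ be a homogeneous, symmetric mean such that for every t ∈ (-1,1) the function M_t(x,y) = (M(x,y)/M(x^t,y^t))^{1/(1-t)} is a mean. Then M is monotone, i.e., nondecreasing in each variable. -/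
/-!
Put `f s = M s 1`. By homogeneity `M x y = y * f (x / y)`, and with symmetry it suffices that `f`
is nondecreasing on `(0, ∞)`. For `a < b ≤ 1` pick `t ∈ [0, 1)` with `a ^ t = b`: the upper mean
bound of `M_t` at `(a, 1)` reads `(f a / f b) ^ (1 / (1 - t)) ≤ 1`, i.e. `f a ≤ f b`. For
`1 ≤ a < b` take `b ^ t = a` and use the lower bound at `(b, 1)` instead. When `a < 1 < b`,
already `f a ≤ 1 ≤ f b` since `M` is a mean.
-/

open Set Real

lemma exists_rpow_eq_of_lt_of_le_one {a b : ℝ} (ha : 0 < a) (hab : a < b) (hb : b ≤ 1) :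
    ∃ t ∈ Ico (0 : ℝ) 1, a ^ t = b := by
  have ha1 : a < 1 := hab.trans_le hb
  refine ⟨logb a b, ⟨logb_nonneg_of_base_lt_one ha ha1 (ha.trans hab) hb, ?_⟩,
    rpow_logb ha ha1.ne (ha.trans hab)⟩
  calc logb a b < logb a a := logb_lt_logb_of_base_lt_one ha ha1 ha hab
    _ = 1 := logb_self_eq_one_iff.2 ⟨ha.ne', ha1.ne, by linarith⟩

lemma exists_rpow_eq_of_one_le_of_lt {a b : ℝ} (ha : 1 ≤ a) (hab : a < b) :
    ∃ t ∈ Ico (0 : ℝ) 1, b ^ t = a := by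
  have ha0 : 0 < a := one_pos.trans_le ha
  obtain ⟨t, ht, hbt⟩ := exists_rpow_eq_of_lt_of_le_one (inv_pos.2 (ha0.trans hab))
    (inv_strictAnti₀ ha0 hab) (inv_le_one_of_one_le₀ ha)
  rw [inv_rpow (ha0.trans hab).le, inv_inj] at hbt
  exact ⟨t, ht, hbt⟩

lemma monotoneOn_of_rpow_quotient_mean {f : ℝ → ℝ}
    (hmean : ∀ a, 0 < a → min a 1 ≤ f a ∧ f a ≤ max a 1)
    (hquot : ∀ t ∈ Ico (0 : ℝ) 1, ∀ a, 0 < a →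
      min a 1 ≤ (f a / f (a ^ t)) ^ (1 / (1 - t)) ∧ (f a / f (a ^ t)) ^ (1 / (1 - t)) ≤ max a 1) :
    MonotoneOn f (Ioi 0) := by
  have hpos : ∀ a, 0 < a → 0 < f a := fun a ha => (lt_min ha one_pos).trans_le (hmean a ha).1
  have hexp : ∀ t ∈ Ico (0 : ℝ) 1, 0 < 1 / (1 - t) := fun t ht => by
    have := ht.2; positivity
  intro a ha b hb hab
  rcases hab.eq_or_lt with rfl | hab
  · rfl
  rcases le_or_gt b 1 with hb1 | hb1
  · obtain ⟨t, ht, rfl⟩ := exists_rpow_eq_of_lt_of_le_one ha hab hb1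
    have h := (hquot t ht a ha).2
    rw [max_eq_right (hab.trans_le hb1).le] at h
    refine (div_le_one (hpos _ hb)).1 ((rpow_le_rpow_iff ?_ zero_le_one (hexp t ht)).1 ?_)
    · exact (div_pos (hpos a ha) (hpos _ hb)).le
    · rwa [one_rpow]
  rcases lt_or_ge a 1 with ha1 | ha1
  · calc f a ≤ max a 1 := (hmean a ha).2
      _ = min b 1 := by rw [max_eq_right ha1.le, min_eq_right hb1.le]
      _ ≤ f b := (hmean b hb).1
  · obtain ⟨t, ht, rfl⟩ := exists_rpow_eq_of_one_le_of_lt ha1 hab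
    have h := (hquot t ht b hb).1
    rw [min_eq_right hb1.le] at h
    refine (one_le_div (hpos _ ha)).1 ((rpow_le_rpow_iff zero_le_one ?_ (hexp t ht)).1 ?_)
    · exact (div_pos (hpos b hb) (hpos _ ha)).le
    · rwa [one_rpow]

lemma eq_mul_apply_div_one {M : ℝ → ℝ → ℝ}
    (hhom : ∀ l x y : ℝ, 0 < l → 0 < x → 0 < y → M (l * x) (l * y) = l * M x y)
    {x y : ℝ} (hx : 0 < x) (hy : 0 < y) : M x y = y * M (x / y) 1 := by
  rw [← hhom y (x / y) 1 hy (div_pos hx hy) one_pos, mul_div_cancel₀ x hy.ne', mul_one]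

lemma apply_le_apply_left {M : ℝ → ℝ → ℝ}
    (hhom : ∀ l x y : ℝ, 0 < l → 0 < x → 0 < y → M (l * x) (l * y) = l * M x y)
    (hf : MonotoneOn (fun s => M s 1) (Ioi 0)) {x₁ x₂ y : ℝ}
    (hx₁ : 0 < x₁) (hx : x₁ ≤ x₂) (hy : 0 < y) : M x₁ y ≤ M x₂ y := by
  have hx₂ : 0 < x₂ := hx₁.trans_le hx
  rw [eq_mul_apply_div_one hhom hx₁ hy, eq_mul_apply_div_one hhom hx₂ hy]
  exact mul_le_mul_of_nonneg_left
    (hf (div_pos hx₁ hy) (div_pos hx₂ hy) (div_le_div_of_nonneg_right hx hy.le)) hy.le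

theorem Mt_mean_implies_monotone (M : ℝ → ℝ → ℝ)
    (hmean : ∀ x y : ℝ, 0 < x → 0 < y → min x y ≤ M x y ∧ M x y ≤ max x y)
    (hhom : ∀ l x y : ℝ, 0 < l → 0 < x → 0 < y → M (l * x) (l * y) = l * M x y)
    (hsym : ∀ x y : ℝ, 0 < x → 0 < y → M x y = M y x)
    (hMt : ∀ t ∈ Set.Ioo (-1 : ℝ) 1, ∀ x y : ℝ, 0 < x → 0 < y →
      min x y ≤ (M x y / M (x ^ t) (y ^ t)) ^ (1 / (1 - t)) ∧
        (M x y / M (x ^ t) (y ^ t)) ^ (1 / (1 - t)) ≤ max x y) :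
    ∀ x₁ y₁ x₂ y₂ : ℝ, 0 < x₁ → 0 < y₁ → x₁ ≤ x₂ → y₁ ≤ y₂ → M x₁ y₁ ≤ M x₂ y₂ := by
  have hf : MonotoneOn (fun s => M s 1) (Ioi 0) :=
    monotoneOn_of_rpow_quotient_mean (fun a ha => hmean a 1 ha one_pos) fun t ht a ha => by
      simpa only [one_rpow] using hMt t ⟨by linarith [ht.1], ht.2⟩ a 1 ha one_pos
  intro x₁ y₁ x₂ y₂ hx₁ hy₁ hx hy
  have hx₂ : 0 < x₂ := hx₁.trans_le hx
  have hy₂ : 0 < y₂ := hy₁.trans_le hy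
  calc M x₁ y₁ ≤ M x₂ y₁ := apply_le_apply_left hhom hf hx₁ hx hy₁
    _ = M y₁ x₂ := hsym x₂ y₁ hx₂ hy₁
    _ ≤ M y₂ x₂ := apply_le_apply_left hhom hf hy₁ hy hx₂
    _ = M x₂ y₂ := hsym y₂ x₂ hy₂ hx₂
end

section
/- Let M : ℝ₊² → ℝ₊ be a monotone, homogeneous, symmetric mean, t ∈ (-1,1), and M_t(x,y) = (M(x,y)/M(x^t,y^t))^{1/(1-t)}. Then the functions K_t(x,y) = x^t·M_t(x,y)^{1-t} and L_t(x,y) = y^t·M_t(x,y)^{1-t} are homogeneous means and satisfy M(K_t(x,y), L_t(x,y)) = M(x,y) for all x, y > 0. -/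
/-!
Writing `c = M(x, y) / M(xᵗ, yᵗ)`, one has `K_t(x, y) = c xᵗ` and `L_t(x, y) = c yᵗ`, so homogeneity
of `M` gives `M(K_t, L_t) = c M(xᵗ, yᵗ) = M(x, y)` at once. Symmetry of `M` turns `L_t(x, y)` into
`K_t(y, x)`, and each of the bounds `min ≤ K_t ≤ max` reduces, after clearing the denominator, to
comparing `a M(u, v)` with `b M(u', v')`; by homogeneity and monotonicity this only needs
`a u ≤ b u'` and `a v ≤ b v'`, which for `0 < x ≤ y` come from `x^(1+t) ≤ y^(1+t)` and
`x^(1-t) ≤ y^(1-t)`, that is, from `-1 ≤ t ≤ 1`.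
-/

open Real

namespace HomogeneousMean

variable {M : ℝ → ℝ → ℝ}

/-- `K_t` of the paper, with `M_t ^ (1 - t) = M(x, y) / M(xᵗ, yᵗ)` substituted. -/
noncomputable def Kt (M : ℝ → ℝ → ℝ) (t x y : ℝ) : ℝ :=
  x ^ t * M x y / M (x ^ t) (y ^ t)

lemma pos_of_min_le (hmean : ∀ x y : ℝ, 0 < x → 0 < y → min x y ≤ M x y)
    {x y : ℝ} (hx : 0 < x) (hy : 0 < y) : 0 < M x y :=
  (lt_min hx hy).trans_le (hmean x y hx hy)

lemma mul_apply_le_mul_apply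
    (hhom : ∀ l x y : ℝ, 0 < l → 0 < x → 0 < y → M (l * x) (l * y) = l * M x y)
    (hmono : ∀ x₁ y₁ x₂ y₂ : ℝ, 0 < x₁ → 0 < y₁ → x₁ ≤ x₂ → y₁ ≤ y₂ → M x₁ y₁ ≤ M x₂ y₂)
    {a b u v u' v' : ℝ} (ha : 0 < a) (hb : 0 < b) (hu : 0 < u) (hv : 0 < v)
    (hu' : 0 < u') (hv' : 0 < v') (hau : a * u ≤ b * u') (hav : a * v ≤ b * v') :
    a * M u v ≤ b * M u' v' := by
  rw [← hhom a u v ha hu hv, ← hhom b u' v' hb hu' hv']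
  exact hmono _ _ _ _ (mul_pos ha hu) (mul_pos ha hv) hau hav

lemma rpow_mul_self_le_rpow_mul_self {x y t : ℝ} (hx : 0 < x) (hxy : x ≤ y) (ht : -1 ≤ t) :
    x ^ t * x ≤ y ^ t * y := by
  rw [← rpow_add_one hx.ne', ← rpow_add_one (hx.trans_le hxy).ne']
  exact rpow_le_rpow hx.le hxy (by linarith)

lemma mul_rpow_le_rpow_mul {x y t : ℝ} (hx : 0 < x) (hxy : x ≤ y) (ht : t ≤ 1) :
    x * y ^ t ≤ x ^ t * y := by
  have hy : 0 < y := hx.trans_le hxy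
  have split : ∀ z : ℝ, 0 < z → z ^ t * z ^ (1 - t) = z := fun z hz => by
    rw [← rpow_add hz, add_sub_cancel, rpow_one]
  calc x * y ^ t = x ^ t * (x ^ (1 - t) * y ^ t) := by rw [← mul_assoc, split x hx]
    _ ≤ x ^ t * (y ^ (1 - t) * y ^ t) := by gcongr
    _ = x ^ t * y := by rw [mul_comm (y ^ (1 - t)), split y hy]

section

variable (hhom : ∀ l x y : ℝ, 0 < l → 0 < x → 0 < y → M (l * x) (l * y) = l * M x y)
include hhom

lemma Kt_mul_mul (hpos : ∀ x y : ℝ, 0 < x → 0 < y → 0 < M x y) (t : ℝ) {l x y : ℝ}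
    (hl : 0 < l) (hx : 0 < x) (hy : 0 < y) : Kt M t (l * x) (l * y) = l * Kt M t x y := by
  have hden : M ((l * x) ^ t) ((l * y) ^ t) = l ^ t * M (x ^ t) (y ^ t) := by
    rw [mul_rpow hl.le hx.le, mul_rpow hl.le hy.le]
    exact hhom _ _ _ (rpow_pos_of_pos hl t) (rpow_pos_of_pos hx t) (rpow_pos_of_pos hy t)
  have hden_pos := hpos _ _ (rpow_pos_of_pos hx t) (rpow_pos_of_pos hy t)
  have hlt_pos := rpow_pos_of_pos hl t
  rw [Kt, Kt, hden, mul_rpow hl.le hx.le, hhom l x y hl hx hy]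
  field_simp

variable (hsym : ∀ x y : ℝ, 0 < x → 0 < y → M x y = M y x)
include hsym

lemma apply_Kt_Kt (hpos : ∀ x y : ℝ, 0 < x → 0 < y → 0 < M x y) (t : ℝ) {x y : ℝ}
    (hx : 0 < x) (hy : 0 < y) : M (Kt M t x y) (Kt M t y x) = M x y := by
  have hxt := rpow_pos_of_pos hx t
  have hyt := rpow_pos_of_pos hy t
  have hden := hpos _ _ hxt hyt
  set c := M x y / M (x ^ t) (y ^ t)
  have hKx : Kt M t x y = c * x ^ t := by rw [Kt]; ring
  have hKy : Kt M t y x = c * y ^ t := by rw [Kt, hsym y x hy hx, hsym _ _ hyt hxt]; ring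
  rw [hKx, hKy, hhom c _ _ (div_pos (hpos x y hx hy) hden) hxt hyt, div_mul_cancel₀ _ hden.ne']

variable (hmono : ∀ x₁ y₁ x₂ y₂ : ℝ, 0 < x₁ → 0 < y₁ → x₁ ≤ x₂ → y₁ ≤ y₂ → M x₁ y₁ ≤ M x₂ y₂)
include hmono

lemma Kt_mem_Icc_of_le (hpos : ∀ x y : ℝ, 0 < x → 0 < y → 0 < M x y) {t : ℝ}
    (ht : t ∈ Set.Icc (-1 : ℝ) 1) {x y : ℝ} (hx : 0 < x) (hxy : x ≤ y) :
    Kt M t x y ∈ Set.Icc x y ∧ Kt M t y x ∈ Set.Icc x y := by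
  have hy : 0 < y := hx.trans_le hxy
  have hxt := rpow_pos_of_pos hx t
  have hyt := rpow_pos_of_pos hy t
  have hden := hpos _ _ hxt hyt
  have hbig := rpow_mul_self_le_rpow_mul_self hx hxy ht.1
  have hmix := mul_rpow_le_rpow_mul hx hxy ht.2
  have hswap : Kt M t y x = y ^ t * M x y / M (x ^ t) (y ^ t) := by
    rw [Kt, hsym y x hy hx, hsym _ _ hyt hxt]
  rw [hswap]
  simp only [Set.mem_Icc, Kt, le_div_iff₀ hden, div_le_iff₀ hden]
  refine ⟨⟨?_, ?_⟩, ?_, ?_⟩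
  · exact mul_apply_le_mul_apply hhom hmono hx hxt hxt hyt hx hy (mul_comm _ _).le hmix
  · rw [hsym x y hx hy]
    exact mul_apply_le_mul_apply hhom hmono hxt hy hy hx hxt hyt (mul_comm _ _).le
      (by linarith [mul_comm x (x ^ t), mul_comm y (y ^ t)])
  · rw [hsym _ _ hxt hyt]
    exact mul_apply_le_mul_apply hhom hmono hx hyt hyt hxt hx hy (mul_comm _ _).le
      (by linarith [mul_comm x (x ^ t)])
  · exact mul_apply_le_mul_apply hhom hmono hyt hy hx hy hxt hyt
      (by linarith [mul_comm x (y ^ t), mul_comm y (x ^ t)]) (mul_comm _ _).le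

lemma Kt_mem_Icc_min_max (hpos : ∀ x y : ℝ, 0 < x → 0 < y → 0 < M x y) {t : ℝ}
    (ht : t ∈ Set.Icc (-1 : ℝ) 1) {x y : ℝ} (hx : 0 < x) (hy : 0 < y) :
    Kt M t x y ∈ Set.Icc (min x y) (max x y) := by
  rcases le_total x y with hxy | hyx
  · rw [min_eq_left hxy, max_eq_right hxy]
    exact (Kt_mem_Icc_of_le hhom hsym hmono hpos ht hx hxy).1
  · rw [min_eq_right hyx, max_eq_left hyx]
    exact (Kt_mem_Icc_of_le hhom hsym hmono hpos ht hy hyx).2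

end

end HomogeneousMean

open HomogeneousMean

theorem Kt_Lt_homogeneous_means_invariance (M : ℝ → ℝ → ℝ)
    (hmean : ∀ x y : ℝ, 0 < x → 0 < y → min x y ≤ M x y ∧ M x y ≤ max x y)
    (hhom : ∀ l x y : ℝ, 0 < l → 0 < x → 0 < y → M (l * x) (l * y) = l * M x y)
    (hsym : ∀ x y : ℝ, 0 < x → 0 < y → M x y = M y x)
    (hmono : ∀ x₁ y₁ x₂ y₂ : ℝ, 0 < x₁ → 0 < y₁ → x₁ ≤ x₂ → y₁ ≤ y₂ → M x₁ y₁ ≤ M x₂ y₂)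
    (t : ℝ) (ht : t ∈ Set.Ioo (-1 : ℝ) 1)
    (Mt K L : ℝ → ℝ → ℝ)
    (hMt : ∀ x y : ℝ, Mt x y = (M x y / M (x ^ t) (y ^ t)) ^ (1 / (1 - t)))
    (hK : ∀ x y : ℝ, K x y = x ^ t * (Mt x y) ^ (1 - t))
    (hL : ∀ x y : ℝ, L x y = y ^ t * (Mt x y) ^ (1 - t)) :
    (∀ l x y : ℝ, 0 < l → 0 < x → 0 < y →
        K (l * x) (l * y) = l * K x y ∧ L (l * x) (l * y) = l * L x y) ∧
    (∀ x y : ℝ, 0 < x → 0 < y →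
        min x y ≤ K x y ∧ K x y ≤ max x y ∧ min x y ≤ L x y ∧ L x y ≤ max x y) ∧
    (∀ x y : ℝ, 0 < x → 0 < y → M (K x y) (L x y) = M x y) := by
  have hpos : ∀ x y : ℝ, 0 < x → 0 < y → 0 < M x y := fun x y hx hy =>
    pos_of_min_le (fun x y hx hy => (hmean x y hx hy).1) hx hy
  have hMt_rpow : ∀ x y, 0 < x → 0 < y → Mt x y ^ (1 - t) = M x y / M (x ^ t) (y ^ t) :=
    fun x y hx hy => by
      rw [hMt, one_div, rpow_inv_rpow (div_pos (hpos x y hx hy) (hpos _ _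
        (rpow_pos_of_pos hx t) (rpow_pos_of_pos hy t))).le (by linarith [ht.2])]
  have hKt : ∀ x y, 0 < x → 0 < y → K x y = Kt M t x y := fun x y hx hy => by
    rw [hK, hMt_rpow x y hx hy, Kt, mul_div_assoc]
  have hLt : ∀ x y, 0 < x → 0 < y → L x y = Kt M t y x := fun x y hx hy => by
    rw [hL, hMt_rpow x y hx hy, Kt, mul_div_assoc, hsym y x hy hx,
      hsym (y ^ t) (x ^ t) (rpow_pos_of_pos hy t) (rpow_pos_of_pos hx t)]
  have htIcc : t ∈ Set.Icc (-1 : ℝ) 1 := Set.Ioo_subset_Icc_self ht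
  refine ⟨fun l x y hl hx hy => ?_, fun x y hx hy => ?_, fun x y hx hy => ?_⟩
  · rw [hKt _ _ (mul_pos hl hx) (mul_pos hl hy), hLt _ _ (mul_pos hl hx) (mul_pos hl hy),
      hKt x y hx hy, hLt x y hx hy]
    exact ⟨Kt_mul_mul hhom hpos t hl hx hy, Kt_mul_mul hhom hpos t hl hy hx⟩
  · obtain ⟨hK₁, hK₂⟩ := Kt_mem_Icc_min_max hhom hsym hmono hpos htIcc hx hy
    obtain ⟨hL₁, hL₂⟩ := Kt_mem_Icc_min_max hhom hsym hmono hpos htIcc hy hx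
    rw [min_comm] at hL₁
    rw [max_comm] at hL₂
    rw [hKt x y hx hy, hLt x y hx hy]
    exact ⟨hK₁, hK₂, hL₁, hL₂⟩
  · rw [hKt x y hx hy, hLt x y hx hy]
    exact apply_Kt_Kt hhom hsym hpos t hx hy
end

section
/- Let M be a monotone, homogeneous, symmetric mean with M ≠ max, t ∈ (0,1), M_t as above, and L_t(x,y) = y^t·M_t(x,y)^{1-t}. If lim_{x→0+} M(x,1) > 0, then the trace function l_t(x) = L_t(x,1) satisfies lim_{x→0+} l_t(x) = 1 = l_t(1), hence L_t is not a monotone mean. -/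
/-!
On the trace, `L x 1 = M x 1 / M (x ^ t) 1`, which tends to `c / c = 1` as `x → 0⁺` and equals
`1` at `x = 1`. A monotone `L` would therefore have trace identically `1` on `(0, 1]`, i.e.
`M (x ^ t) 1 = M x 1` there. Iterating gives `M x 1 = M (x ^ t ^ n) 1 ≥ x ^ t ^ n → 1`, so the
trace of `M` is `1` on `(0, 1]`, and by homogeneity and symmetry `M = max`.
-/

open Filter Set Topology

lemma tendsto_rpow_nhdsGT_zero_nhdsGT_zero {t : ℝ} (ht : 0 < t) :
    Tendsto (fun x : ℝ => x ^ t) (𝓝[>] 0) (𝓝[>] 0) := by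
  refine tendsto_nhdsWithin_of_tendsto_nhds_of_eventually_within _ ?_
    (eventually_nhdsWithin_of_forall fun x hx => Real.rpow_pos_of_pos hx t)
  simpa [Real.zero_rpow ht.ne'] using
    (Real.continuousAt_rpow_const 0 t (Or.inr ht.le)).tendsto.mono_left nhdsWithin_le_nhds

lemma tendsto_div_comp_rpow_nhdsGT_zero {f : ℝ → ℝ} {c t : ℝ} (hc : c ≠ 0) (ht : 0 < t)
    (hf : Tendsto f (𝓝[>] 0) (𝓝 c)) :
    Tendsto (fun x => f x / f (x ^ t)) (𝓝[>] 0) (𝓝 1) := by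
  rw [← div_self hc]
  exact hf.div (hf.comp (tendsto_rpow_nhdsGT_zero_nhdsGT_zero ht)) hc

lemma eq_of_monotoneOn_Ioc_of_tendsto_nhdsGT {g : ℝ → ℝ} {a b : ℝ}
    (hg : MonotoneOn g (Ioc a b)) (hlim : Tendsto g (𝓝[>] a) (𝓝 (g b))) :
    ∀ x ∈ Ioc a b, g x = g b := by
  intro x hx
  refine le_antisymm (hg hx (right_mem_Ioc.2 (hx.1.trans_le hx.2)) hx.2) (le_of_tendsto hlim ?_)
  filter_upwards [Ioo_mem_nhdsGT hx.1] with y hy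
  exact hg ⟨hy.1, hy.2.le.trans hx.2⟩ hx hy.2.le

lemma rpow_mem_Ioc_zero_one {x s : ℝ} (hx : x ∈ Ioc (0 : ℝ) 1) (hs : 0 ≤ s) :
    x ^ s ∈ Ioc (0 : ℝ) 1 :=
  ⟨Real.rpow_pos_of_pos hx.1 s, Real.rpow_le_one hx.1.le hx.2 hs⟩

lemma apply_rpow_pow_eq {f : ℝ → ℝ} {t : ℝ} (ht : 0 ≤ t)
    (hfix : ∀ x ∈ Ioc (0 : ℝ) 1, f (x ^ t) = f x) (n : ℕ) :
    ∀ x ∈ Ioc (0 : ℝ) 1, f (x ^ t ^ n) = f x := by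
  induction n with
  | zero => simp
  | succ n ih =>
    intro x hx
    rw [pow_succ, Real.rpow_mul hx.1.le, hfix _ (rpow_mem_Ioc_zero_one hx (pow_nonneg ht n)),
      ih x hx]

lemma tendsto_rpow_pow_atTop_nhds_one {x t : ℝ} (hx : 0 < x) (ht0 : 0 ≤ t) (ht1 : t < 1) :
    Tendsto (fun n : ℕ => x ^ t ^ n) atTop (𝓝 1) := by
  simpa [Function.comp_def] using (Real.continuousAt_const_rpow hx.ne').tendsto.comp
    (tendsto_pow_atTop_nhds_zero_of_lt_one ht0 ht1)

lemma eq_one_of_apply_rpow_eq {f : ℝ → ℝ} {t : ℝ} (ht0 : 0 ≤ t) (ht1 : t < 1)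
    (hf : ∀ x ∈ Ioc (0 : ℝ) 1, x ≤ f x ∧ f x ≤ 1)
    (hfix : ∀ x ∈ Ioc (0 : ℝ) 1, f (x ^ t) = f x) :
    ∀ x ∈ Ioc (0 : ℝ) 1, f x = 1 := by
  intro x hx
  refine le_antisymm (hf x hx).2 (le_of_tendsto (tendsto_rpow_pow_atTop_nhds_one hx.1 ht0 ht1) ?_)
  refine Eventually.of_forall fun n => ?_
  rw [← apply_rpow_pow_eq ht0 hfix n x hx]
  exact (hf _ (rpow_mem_Ioc_zero_one hx (pow_nonneg ht0 n))).1

lemma eq_max_of_trace_eq_one {M : ℝ → ℝ → ℝ}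
    (hhom : ∀ l x y : ℝ, 0 < l → 0 < x → 0 < y → M (l * x) (l * y) = l * M x y)
    (hsym : ∀ x y : ℝ, 0 < x → 0 < y → M x y = M y x)
    (hone : ∀ x ∈ Ioc (0 : ℝ) 1, M x 1 = 1) {x y : ℝ} (hx : 0 < x) (hy : 0 < y) :
    M x y = max x y := by
  wlog hxy : x ≤ y generalizing x y
  · rw [hsym x y hx hy, max_comm]
    exact this hy hx (le_of_not_ge hxy)
  have hscale := hhom y (x / y) 1 hy (div_pos hx hy) one_pos
  rw [mul_div_cancel₀ _ hy.ne', mul_one] at hscale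
  rw [hscale, hone _ ⟨div_pos hx hy, (div_le_one hy).2 hxy⟩, mul_one, max_eq_right hxy]

lemma trace_Lt_eq_div {M Mt L : ℝ → ℝ → ℝ} {t x : ℝ} (ht : t ≠ 1)
    (hMt : ∀ x y : ℝ, Mt x y = (M x y / M (x ^ t) (y ^ t)) ^ (1 / (1 - t)))
    (hL : ∀ x y : ℝ, L x y = y ^ t * (Mt x y) ^ (1 - t))
    (hq : 0 ≤ M x 1 / M (x ^ t) 1) :
    L x 1 = M x 1 / M (x ^ t) 1 := by
  rw [hL, hMt, Real.one_rpow, one_mul, one_div, Real.rpow_inv_rpow hq (sub_ne_zero.2 ht.symm)]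

theorem Lt_not_monotone_general (M : ℝ → ℝ → ℝ)
    (hmean : ∀ x y : ℝ, 0 < x → 0 < y → min x y ≤ M x y ∧ M x y ≤ max x y)
    (hhom : ∀ l x y : ℝ, 0 < l → 0 < x → 0 < y → M (l * x) (l * y) = l * M x y)
    (hsym : ∀ x y : ℝ, 0 < x → 0 < y → M x y = M y x)
    (hMnotmax : ∃ x y : ℝ, 0 < x ∧ 0 < y ∧ M x y ≠ max x y)
    (t : ℝ) (ht : t ∈ Set.Ioo (0 : ℝ) 1)
    (Mt L : ℝ → ℝ → ℝ)
    (hMt : ∀ x y : ℝ, Mt x y = (M x y / M (x ^ t) (y ^ t)) ^ (1 / (1 - t)))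
    (hL : ∀ x y : ℝ, L x y = y ^ t * (Mt x y) ^ (1 - t))
    (hlim : ∃ c : ℝ, 0 < c ∧
      Filter.Tendsto (fun x => M x 1) (nhdsWithin 0 (Set.Ioi 0)) (nhds c)) :
    Filter.Tendsto (fun x => L x 1) (nhdsWithin 0 (Set.Ioi 0)) (nhds 1) ∧
    L 1 1 = 1 ∧
    ¬ (∀ x₁ y₁ x₂ y₂ : ℝ, 0 < x₁ → 0 < y₁ → x₁ ≤ x₂ → y₁ ≤ y₂ → L x₁ y₁ ≤ L x₂ y₂) := by
  obtain ⟨ht0, ht1⟩ := ht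
  obtain ⟨c, hc, hMc⟩ := hlim
  have hpos : ∀ x, 0 < x → 0 < M x 1 := fun x hx =>
    (lt_min hx one_pos).trans_le (hmean x 1 hx one_pos).1
  have htrace : ∀ x, 0 < x → L x 1 = M x 1 / M (x ^ t) 1 := fun x hx =>
    trace_Lt_eq_div ht1.ne hMt hL
      (div_nonneg (hpos x hx).le (hpos _ (Real.rpow_pos_of_pos hx t)).le)
  have hL11 : L 1 1 = 1 := by
    rw [htrace 1 one_pos, Real.one_rpow, div_self (hpos 1 one_pos).ne']
  have hlimL : Tendsto (fun x => L x 1) (𝓝[>] 0) (𝓝 1) :=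
    (tendsto_div_comp_rpow_nhdsGT_zero hc.ne' ht0 hMc).congr'
      (eventually_nhdsWithin_of_forall fun x hx => (htrace x hx).symm)
  refine ⟨hlimL, hL11, fun hmonoL => ?_⟩
  have hLone : ∀ x ∈ Ioc (0 : ℝ) 1, L x 1 = 1 := by
    simpa only [hL11] using eq_of_monotoneOn_Ioc_of_tendsto_nhdsGT (g := fun x => L x 1) (b := 1)
      (fun x hx y _ hxy => hmonoL x 1 y 1 hx.1 one_pos hxy le_rfl) (by rwa [hL11])
  have hfix : ∀ x ∈ Ioc (0 : ℝ) 1, M (x ^ t) 1 = M x 1 := fun x hx => by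
    have h := hLone x hx
    rw [htrace x hx.1, div_eq_one_iff_eq (hpos _ (Real.rpow_pos_of_pos hx.1 t)).ne'] at h
    exact h.symm
  have hbounds : ∀ x ∈ Ioc (0 : ℝ) 1, x ≤ M x 1 ∧ M x 1 ≤ 1 := fun x hx => by
    simpa [min_eq_left hx.2, max_eq_right hx.2] using hmean x 1 hx.1 one_pos
  obtain ⟨a, b, ha, hb, hne⟩ := hMnotmax
  exact hne (eq_max_of_trace_eq_one hhom hsym
    (eq_one_of_apply_rpow_eq ht0.le ht1 hbounds hfix) ha hb)

theorem Lt_not_monotone (M : ℝ → ℝ → ℝ)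
    (hmean : ∀ x y : ℝ, 0 < x → 0 < y → min x y ≤ M x y ∧ M x y ≤ max x y)
    (hhom : ∀ l x y : ℝ, 0 < l → 0 < x → 0 < y → M (l * x) (l * y) = l * M x y)
    (hsym : ∀ x y : ℝ, 0 < x → 0 < y → M x y = M y x)
    (hmono : ∀ x₁ y₁ x₂ y₂ : ℝ, 0 < x₁ → 0 < y₁ → x₁ ≤ x₂ → y₁ ≤ y₂ → M x₁ y₁ ≤ M x₂ y₂)
    (hMnotmax : ∃ x y : ℝ, 0 < x ∧ 0 < y ∧ M x y ≠ max x y)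
    (t : ℝ) (ht : t ∈ Set.Ioo (0 : ℝ) 1)
    (Mt L : ℝ → ℝ → ℝ)
    (hMt : ∀ x y : ℝ, Mt x y = (M x y / M (x ^ t) (y ^ t)) ^ (1 / (1 - t)))
    (hL : ∀ x y : ℝ, L x y = y ^ t * (Mt x y) ^ (1 - t))
    (hlim : ∃ c : ℝ, 0 < c ∧
      Filter.Tendsto (fun x => M x 1) (nhdsWithin 0 (Set.Ioi 0)) (nhds c)) :
    Filter.Tendsto (fun x => L x 1) (nhdsWithin 0 (Set.Ioi 0)) (nhds 1) ∧
    L 1 1 = 1 ∧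
    ¬ (∀ x₁ y₁ x₂ y₂ : ℝ, 0 < x₁ → 0 < y₁ → x₁ ≤ x₂ → y₁ ≤ y₂ → L x₁ y₁ ≤ L x₂ y₂) :=
  Lt_not_monotone_general M hmean hhom hsym hMnotmax t ht Mt L hMt hL hlim
end

section
/- For 0 < t < 1/2 and arbitrary means C, D on ℝ₊², the function N(x,y) = (G(x,y)/G(C(x,y)^t, D(x,y)^t))^{1/(1-t)} is a mean, where G is the geometric mean. -/
/-!
Taking logarithms turns the claim into a statement about arithmetic means: with `a ≤ b` the logs
of `min x y` and `max x y`, and `α, β ∈ [a, b]` the logs of `C x y` and `D x y`, the logarithm of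
`N x y` is `((a + b) / 2 - t (α + β) / 2) / (1 - t)`. Its distance to `a` (and to `b`) is
`(b - a) / 2` minus at most `t (b - a)`, which is nonnegative since `t ≤ 1 / 2`.
-/

open Real Set

theorem arith_mean_sub_mul_div_one_sub_mem_Icc {a b α β t : ℝ} (ht₀ : 0 ≤ t) (ht : t ≤ 1 / 2)
    (hα : α ∈ Icc a b) (hβ : β ∈ Icc a b) :
    ((a + b) / 2 - t * ((α + β) / 2)) / (1 - t) ∈ Icc a b := by
  obtain ⟨hα₁, hα₂⟩ := hα
  obtain ⟨hβ₁, hβ₂⟩ := hβ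
  have h1t : 0 < 1 - t := by linarith
  constructor
  · rw [le_div_iff₀ h1t]
    nlinarith [mul_le_mul_of_nonneg_left (add_le_add hα₂ hβ₂) ht₀]
  · rw [div_le_iff₀ h1t]
    nlinarith [mul_le_mul_of_nonneg_left (add_le_add hα₁ hβ₁) ht₀]

theorem log_rpow_sqrt_div_sqrt_mul_rpow {x y c d : ℝ} (t : ℝ) (hx : 0 < x) (hy : 0 < y)
    (hc : 0 < c) (hd : 0 < d) :
    log ((√(x * y) / √(c ^ t * d ^ t)) ^ (1 / (1 - t))) =
      ((log x + log y) / 2 - t * ((log c + log d) / 2)) / (1 - t) := by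
  have hct : 0 < c ^ t := rpow_pos_of_pos hc t
  have hdt : 0 < d ^ t := rpow_pos_of_pos hd t
  rw [log_rpow (by positivity), log_div (by positivity) (by positivity),
    log_sqrt (by positivity), log_sqrt (by positivity), log_mul hx.ne' hy.ne',
    log_mul hct.ne' hdt.ne', log_rpow hc, log_rpow hd]
  ring

theorem mem_Icc_of_log_mem_Icc {a b z : ℝ} (ha : 0 < a) (hb : 0 < b) (hz : 0 < z)
    (h : log z ∈ Icc (log a) (log b)) : z ∈ Icc a b :=
  ⟨(log_le_log_iff ha hz).1 h.1, (log_le_log_iff hz hb).1 h.2⟩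

theorem G_ratio_is_mean (t : ℝ) (ht : t ∈ Set.Ioo (0 : ℝ) (1 / 2))
    (C D : ℝ → ℝ → ℝ)
    (hC : ∀ x y : ℝ, 0 < x → 0 < y → min x y ≤ C x y ∧ C x y ≤ max x y)
    (hD : ∀ x y : ℝ, 0 < x → 0 < y → min x y ≤ D x y ∧ D x y ≤ max x y)
    (x y : ℝ) (hx : 0 < x) (hy : 0 < y) :
    min x y ≤ (Real.sqrt (x * y) / Real.sqrt ((C x y) ^ t * (D x y) ^ t)) ^ (1 / (1 - t)) ∧
      (Real.sqrt (x * y) / Real.sqrt ((C x y) ^ t * (D x y) ^ t)) ^ (1 / (1 - t)) ≤ max x y := by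
  obtain ⟨ht₀, ht⟩ := ht
  obtain ⟨hC₁, hC₂⟩ := hC x y hx hy
  obtain ⟨hD₁, hD₂⟩ := hD x y hx hy
  have hmin : 0 < min x y := lt_min hx hy
  have hmax : 0 < max x y := lt_max_of_lt_left hx
  have hCpos : 0 < C x y := hmin.trans_le hC₁
  have hDpos : 0 < D x y := hmin.trans_le hD₁
  have log_mem {c : ℝ} (h₁ : min x y ≤ c) (h₂ : c ≤ max x y) :
      log c ∈ Icc (log (min x y)) (log (max x y)) :=
    ⟨log_le_log hmin h₁, log_le_log (hmin.trans_le h₁) h₂⟩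
  have hlog_xy : log x + log y = log (min x y) + log (max x y) := by
    rw [← log_mul hx.ne' hy.ne', ← log_mul hmin.ne' hmax.ne', min_mul_max]
  refine mem_Icc_of_log_mem_Icc hmin hmax (by positivity) ?_
  rw [log_rpow_sqrt_div_sqrt_mul_rpow t hx hy hCpos hDpos, hlog_xy]
  exact arith_mean_sub_mul_div_one_sub_mem_Icc ht₀.le ht.le (log_mem hC₁ hC₂) (log_mem hD₁ hD₂)
end

section
/- For every t ∈ (0,1), the function N(x,y) = (A(x,y)/A(A(x,y)^t, H(x,y)^t))^{1/(1-t)} is not a mean: there exists x > 1 with N(x,1) > x. -/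
noncomputable def amean (x y : ℝ) : ℝ := (x + y) / 2
noncomputable def hmean (x y : ℝ) : ℝ := 2 * x * y / (x + y)

/-!
For large `x`, `A(x,1) ≈ x/2` while `H(x,1) < 2` stays bounded, so
`A / A(A^t, H^t) ≈ 2^t x^(1-t)`, and the factor `2^t > 1` pushes `N(x,1)` above `x`.
Quantitatively, with `c = 2^t`: `x^(1-t) A^t ≤ (x+1)/c` and `x^(1-t) H^t < c x / x^t`, and the
latter is at most `x (c-1)/c` as soon as `x^t ≥ c²/(c-1)`; the two bounds then add up to less
than `x + 1 = 2A`.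
-/

open Real

lemma hmean_lt_two_mul_right {x y : ℝ} (hx : 0 < x) (hy : 0 < y) : hmean x y < 2 * y := by
  rw [hmean, div_lt_iff₀ (by linarith)]
  nlinarith

lemma rpow_one_sub_mul_rpow_le {x y t : ℝ} (hx : 0 ≤ x) (hxy : x ≤ y) (ht1 : t ≤ 1) :
    x ^ (1 - t) * y ^ t ≤ y :=
  calc x ^ (1 - t) * y ^ t ≤ y ^ (1 - t) * y ^ t := by
        have := rpow_nonneg (hx.trans hxy) t
        gcongr
    _ = y := by rw [← rpow_add' (hx.trans hxy) (by norm_num), sub_add_cancel, rpow_one]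

lemma rpow_one_sub_lt_amean_div_amean_rpow {x t : ℝ} (hx : 0 < x) (ht0 : 0 < t) (ht1 : t < 1)
    (hxt : (2 ^ t) ^ 2 ≤ x ^ t * (2 ^ t - 1)) :
    x ^ (1 - t) < amean x 1 / amean (amean x 1 ^ t) (hmean x 1 ^ t) := by
  have hc : (1 : ℝ) < 2 ^ t := one_lt_rpow one_lt_two ht0
  set c : ℝ := 2 ^ t with hc_def
  have hxt_pos : 0 < x ^ t := by positivity
  have hA : x ^ (1 - t) * amean x 1 ^ t ≤ (x + 1) / c := by
    calc x ^ (1 - t) * amean x 1 ^ t = x ^ (1 - t) * (x + 1) ^ t / c := by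
          rw [amean, div_rpow (by linarith) zero_le_two, mul_div_assoc]
      _ ≤ (x + 1) / c := by
          gcongr
          exact rpow_one_sub_mul_rpow_le hx.le (by linarith) ht1.le
  have hH : x ^ (1 - t) * hmean x 1 ^ t < x * (c - 1) / c := by
    calc x ^ (1 - t) * hmean x 1 ^ t < x ^ (1 - t) * c := by
          have hH_pos : 0 < hmean x 1 := by rw [hmean]; positivity
          have hH_lt : hmean x 1 < 2 := by simpa using hmean_lt_two_mul_right hx one_pos
          gcongr
          rw [hc_def]
          gcongr
      _ = x * c / x ^ t := by rw [rpow_sub hx, rpow_one]; ring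
      _ ≤ x * (c - 1) / c := by
          rw [div_le_div_iff₀ hxt_pos (by linarith)]
          nlinarith
  have hS_pos : 0 < amean (amean x 1 ^ t) (hmean x 1 ^ t) := by
    rw [amean, amean, hmean]; positivity
  rw [lt_div_iff₀ hS_pos]
  calc x ^ (1 - t) * amean (amean x 1 ^ t) (hmean x 1 ^ t)
        = (x ^ (1 - t) * amean x 1 ^ t + x ^ (1 - t) * hmean x 1 ^ t) / 2 := by
          simp only [amean]; ring
    _ < ((x + 1) / c + x * (c - 1) / c) / 2 := by linarith
    _ = (x + 1 / c) / 2 := by field_simp; ring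
    _ ≤ amean x 1 := by
          rw [amean]
          gcongr
          exact (div_le_one (by linarith)).2 hc.le

theorem A_AH_not_mean (t : ℝ) (ht : t ∈ Set.Ioo (0 : ℝ) 1) :
    ∃ x : ℝ, 1 < x ∧
      (amean x 1 / amean ((amean x 1) ^ t) ((hmean x 1) ^ t)) ^ (1 / (1 - t)) > x := by
  obtain ⟨ht0, ht1⟩ := ht
  have hc : (1 : ℝ) < 2 ^ t := one_lt_rpow one_lt_two ht0
  set K : ℝ := (2 ^ t) ^ 2 / (2 ^ t - 1) with hK_def
  have hK : 1 < K := by rw [hK_def, one_lt_div (by linarith)]; nlinarith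
  have hx : 1 < K ^ t⁻¹ := one_lt_rpow hK (inv_pos.2 ht0)
  refine ⟨K ^ t⁻¹, hx, ?_⟩
  have hxt : (2 ^ t) ^ 2 ≤ (K ^ t⁻¹) ^ t * (2 ^ t - 1) := by
    rw [rpow_inv_rpow (by linarith) ht0.ne', hK_def, div_mul_cancel₀ _ (by linarith)]
  have key := rpow_one_sub_lt_amean_div_amean_rpow (by linarith) ht0 ht1 hxt
  have hpow_pos : 0 < (K ^ t⁻¹) ^ (1 - t) := by positivity
  rw [gt_iff_lt, one_div]
  exact (lt_rpow_inv_iff_of_pos (by linarith) (by linarith) (by linarith)).2 key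
end

section
/- The function N(x,y) = (L(x,y) / L(A(x,y)^{1/2}, H(x,y)^{1/2}))² is a mean on ℝ₊², where L is the logarithmic mean, A the arithmetic mean, and H the harmonic mean. -/
open Real

theorem le_of_hasDerivAt_le {f g f' g' : ℝ → ℝ} {a t : ℝ} (hf : ∀ u, HasDerivAt f (f' u) u)
    (hg : ∀ u, HasDerivAt g (g' u) u) (ha : f a ≤ g a) (hderiv : ∀ u, a ≤ u → f' u ≤ g' u)
    (ht : a ≤ t) : f t ≤ g t :=
  image_le_of_deriv_right_le_deriv_boundary
    (fun u _ => (hf u).continuousAt.continuousWithinAt) (fun u _ => (hf u).hasDerivWithinAt) ha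
    (fun u _ => (hg u).continuousAt.continuousWithinAt) (fun u _ => (hg u).hasDerivWithinAt)
    (fun u hu => hderiv u hu.1) ⟨ht, le_rfl⟩

namespace Real

theorem sinh_le_mul_cosh {t : ℝ} (ht : 0 ≤ t) : sinh t ≤ t * cosh t :=
  le_of_hasDerivAt_le hasDerivAt_sinh
    (fun u => ((hasDerivAt_id' u).mul (hasDerivAt_cosh u)).congr_deriv (by simp))
    (by simp) (fun u hu => le_add_of_nonneg_right (mul_nonneg hu (sinh_nonneg_iff.2 hu))) ht

theorem log_cosh_le {t : ℝ} (ht : 0 ≤ t) : log (cosh t) ≤ t * sinh t / (cosh t + 1) := by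
  refine le_of_hasDerivAt_le (fun u => (hasDerivAt_cosh u).log (cosh_pos u).ne')
    (g := fun u => u * sinh u / (cosh u + 1)) (g' := fun u => (sinh u + u) / (cosh u + 1))
    (fun u => ?_) (by simp) (fun u hu => ?_) ht
  · have hc : cosh u + 1 ≠ 0 := by positivity
    refine (((hasDerivAt_id' u).mul (hasDerivAt_sinh u)).div
      ((hasDerivAt_cosh u).add_const 1) hc).congr_deriv ?_
    simp only [Pi.mul_apply]
    field_simp
    linear_combination u * cosh_sq u
  · rw [div_le_div_iff₀ (cosh_pos u) (by positivity)]
    linarith [sinh_le_mul_cosh hu]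

theorem mul_sinh_div_le_log_cosh {t : ℝ} (ht : 0 ≤ t) :
    t * sinh t / (2 * cosh t) ≤ log (cosh t) := by
  refine le_of_hasDerivAt_le (f := fun u => u * sinh u / (2 * cosh u))
    (f' := fun u => (sinh u * cosh u + u) / (2 * cosh u ^ 2))
    (fun u => ?_) (fun u => (hasDerivAt_cosh u).log (cosh_pos u).ne') (by simp) (fun u hu => ?_) ht
  · have hc : 2 * cosh u ≠ 0 := by positivity
    refine (((hasDerivAt_id' u).mul (hasDerivAt_sinh u)).div
      ((hasDerivAt_cosh u).const_mul 2) hc).congr_deriv ?_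
    simp only [Pi.mul_apply]
    field_simp
    linear_combination u * cosh_sq u
  · have : u ≤ sinh u * cosh u := by
      have := self_le_sinh_iff.2 (by linarith : 0 ≤ 2 * u)
      rw [sinh_two_mul] at this
      linarith
    rw [div_le_div_iff₀ (by positivity) (cosh_pos u)]
    nlinarith [cosh_pos u]

theorem sq_sinh_mul_sq_log_cosh_le (t : ℝ) :
    sinh t ^ 2 * log (cosh t) ^ 2 ≤ t ^ 2 * (cosh t - 1) ^ 2 := by
  have h := log_cosh_le (abs_nonneg t)
  rw [cosh_abs, ← abs_sinh] at h
  have key : |sinh t| * log (cosh t) ≤ |t| * (cosh t - 1) :=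
    calc |sinh t| * log (cosh t) ≤ |sinh t| * (|t| * |sinh t| / (cosh t + 1)) :=
          mul_le_mul_of_nonneg_left h (abs_nonneg _)
      _ = |t| * (cosh t - 1) := by
          field_simp
          linear_combination |t| * (sq_abs (sinh t)) - |t| * cosh_sq t
  simpa only [mul_pow, sq_abs] using
    pow_le_pow_left₀ (mul_nonneg (abs_nonneg _) (log_nonneg (one_le_cosh t))) key 2

theorem sq_mul_sq_cosh_sub_one_le (t : ℝ) :
    t ^ 2 * (cosh t - 1) ^ 2 ≤ sinh t ^ 2 * cosh t * log (cosh t) ^ 2 := by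
  have h := mul_sinh_div_le_log_cosh (abs_nonneg t)
  rw [cosh_abs, ← abs_sinh] at h
  have h2 : t ^ 2 * sinh t ^ 2 / (4 * cosh t ^ 2) ≤ log (cosh t) ^ 2 := by
    simpa only [div_pow, mul_pow, sq_abs, show (2 : ℝ) ^ 2 = 4 by norm_num] using
      pow_le_pow_left₀ (by positivity) h 2
  calc t ^ 2 * (cosh t - 1) ^ 2
      ≤ t ^ 2 * (cosh t - 1) ^ 2 * ((cosh t + 1) ^ 2 / (4 * cosh t)) := by
        refine le_mul_of_one_le_right (by positivity) ?_
        rw [one_le_div (by positivity)]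
        nlinarith [sq_nonneg (cosh t - 1)]
    _ = sinh t ^ 2 * cosh t * (t ^ 2 * sinh t ^ 2 / (4 * cosh t ^ 2)) := by
        field_simp
        linear_combination (t ^ 2 * (cosh t ^ 2 - 1 + sinh t ^ 2)) * cosh_sq t
    _ ≤ sinh t ^ 2 * cosh t * log (cosh t) ^ 2 :=
        mul_le_mul_of_nonneg_left h2 (by positivity)

theorem sq_sinh_half_log_cosh (t : ℝ) :
    sinh (log (cosh t) / 2) ^ 2 = (cosh t - 1) ^ 2 / (4 * cosh t) := by
  have h := cosh_two_mul (log (cosh t) / 2)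
  rw [mul_div_cancel₀ _ two_ne_zero, cosh_log (cosh_pos t), cosh_sq] at h
  field_simp at h ⊢
  linear_combination -h

end Real

theorem logMean_self (x : ℝ) : logMean x x = x := if_pos rfl

theorem logMean_exp_add_exp_sub (m : ℝ) {t : ℝ} (ht : t ≠ 0) :
    logMean (exp (m + t)) (exp (m - t)) = exp m * sinh t / t := by
  have hne : exp (m + t) ≠ exp (m - t) := by
    rw [Ne, exp_eq_exp]
    contrapose! ht
    linarith
  rw [logMean, if_neg hne, log_exp, log_exp, sinh_eq, exp_add, exp_sub, exp_neg,
    show m + t - (m - t) = 2 * t by ring]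
  field_simp

theorem exists_eq_exp_add_and_eq_exp_sub {x y : ℝ} (hx : 0 < x) (hy : 0 < y) :
    ∃ m t, x = exp (m + t) ∧ y = exp (m - t) :=
  ⟨(log x + log y) / 2, (log x - log y) / 2,
    (exp_log hx).symm.trans (by congr 1; ring), (exp_log hy).symm.trans (by congr 1; ring)⟩

noncomputable def lahHalfMean (x y : ℝ) : ℝ :=
  (logMean x y /
    logMean (((x + y) / 2) ^ ((1 : ℝ) / 2)) ((2 * x * y / (x + y)) ^ ((1 : ℝ) / 2))) ^ 2

theorem lahHalfMean_self {x : ℝ} (hx : 0 < x) : lahHalfMean x x = x := by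
  rw [lahHalfMean, show (x + x) / 2 = x by ring, show 2 * x * x / (x + x) = x by field_simp; ring,
    logMean_self, logMean_self, ← sqrt_eq_rpow, div_sqrt, sq_sqrt hx.le]

theorem lahHalfMean_exp_add_exp_sub (m : ℝ) {t : ℝ} (ht : t ≠ 0) :
    lahHalfMean (exp (m + t)) (exp (m - t)) =
      exp m * (sinh t ^ 2 * cosh t * log (cosh t) ^ 2 / (t ^ 2 * (cosh t - 1) ^ 2)) := by
  have hA : (exp (m + t) + exp (m - t)) / 2 = exp (m + log (cosh t)) := by
    rw [exp_add m (log (cosh t)), exp_log (cosh_pos t), cosh_eq, exp_add, exp_sub, exp_neg]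
    field_simp
  have hH : 2 * exp (m + t) * exp (m - t) / (exp (m + t) + exp (m - t)) =
      exp (m - log (cosh t)) := by
    rw [exp_sub m (log (cosh t)), exp_log (cosh_pos t), cosh_eq, exp_add, exp_sub, exp_neg]
    field_simp
  have hsqrt (u : ℝ) : exp u ^ ((1 : ℝ) / 2) = exp (u / 2) := by rw [← exp_mul]; ring_nf
  have hexp : exp (m / 2) ^ 2 = exp m := by rw [sq, ← exp_add, add_halves]
  have hℓ : log (cosh t) ≠ 0 := (log_pos (one_lt_cosh.2 ht)).ne'
  rw [lahHalfMean, hA, hH, hsqrt, hsqrt, add_div, sub_div, logMean_exp_add_exp_sub _ ht,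
    logMean_exp_add_exp_sub _ (div_ne_zero hℓ two_ne_zero)]
  simp only [div_pow, mul_pow, hexp, sq_sinh_half_log_cosh]
  field_simp
  ring

theorem lahHalfMean_mem_Icc {x y : ℝ} (hx : 0 < x) (hy : 0 < y) :
    lahHalfMean x y ∈ Set.Icc √(x * y) ((x + y) / 2) := by
  obtain ⟨m, t, rfl, rfl⟩ := exists_eq_exp_add_and_eq_exp_sub hx hy
  have hG : √(exp (m + t) * exp (m - t)) = exp m := by
    rw [← exp_add, show m + t + (m - t) = m + m by ring, exp_add, sqrt_mul_self (exp_pos m).le]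
  have hA : (exp (m + t) + exp (m - t)) / 2 = exp m * cosh t := by
    rw [cosh_eq, exp_add, exp_sub, exp_neg]
    field_simp
  rw [hG, hA]
  rcases eq_or_ne t 0 with rfl | ht
  · simp [lahHalfMean_self (exp_pos m)]
  have hD : 0 < t ^ 2 * (cosh t - 1) ^ 2 := by
    have := sub_pos.2 (one_lt_cosh.2 ht)
    positivity
  rw [lahHalfMean_exp_add_exp_sub m ht]
  constructor
  · exact le_mul_of_one_le_right (exp_pos m).le
      ((one_le_div hD).2 (sq_mul_sq_cosh_sub_one_le t))
  · refine mul_le_mul_of_nonneg_left ((div_le_iff₀ hD).2 ?_) (exp_pos m).le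
    linarith [mul_le_mul_of_nonneg_left (sq_sinh_mul_sq_log_cosh_le t) (cosh_pos t).le]

theorem min_le_sqrt_mul {x y : ℝ} (hx : 0 ≤ x) (hy : 0 ≤ y) : min x y ≤ √(x * y) :=
  calc min x y = √(min x y * min x y) := (sqrt_mul_self (le_min hx hy)).symm
    _ ≤ √(x * y) :=
      sqrt_le_sqrt (mul_le_mul (min_le_left x y) (min_le_right x y) (le_min hx hy) hx)

theorem add_div_two_le_max (x y : ℝ) : (x + y) / 2 ≤ max x y := by
  linarith [le_max_left x y, le_max_right x y]

theorem L_AH_half_is_mean (x y : ℝ) (hx : 0 < x) (hy : 0 < y) :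
    min x y ≤ (logMean x y /
        logMean (((x + y) / 2) ^ ((1 : ℝ) / 2)) ((2 * x * y / (x + y)) ^ ((1 : ℝ) / 2))) ^ 2 ∧
      (logMean x y /
        logMean (((x + y) / 2) ^ ((1 : ℝ) / 2)) ((2 * x * y / (x + y)) ^ ((1 : ℝ) / 2))) ^ 2
        ≤ max x y := by
  obtain ⟨hG, hA⟩ := lahHalfMean_mem_Icc hx hy
  exact ⟨(min_le_sqrt_mul hx.le hy.le).trans hG, hA.trans (add_div_two_le_max x y)⟩
end

section
/- Let M be a symmetric, homogeneous, monotone (nondecreasing) mean on ℝ₊² and let C, D be arbitrary means on ℝ₊². For t ∈ (0,1), define N_t(x,y) = (M(x,y)/M(C(x,y)^t, D(x,y)^t))^{1/(1-t)}. Then K_t = C^t·N_t^{1-t} and L_t = D^t·N_t^{1-t} are means and satisfy M(K_t(x,y), L_t(x,y)) = M(x,y) for all x, y > 0. -/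
/-!
Put `a = min x y`, `b = max x y`, `c = C x y`, `d = D x y`. By homogeneity `M(K, L)` is
`N ^ (1 - t) * M(c ^ t, d ^ t) = M(x, y)`. For the mean property write
`M(c ^ t, d ^ t) = c ^ t * M(1, r)` with `r = (d / c) ^ t`, so that `K = M(a, b) / M(1, r)`.
Since `d / c ∈ [a / b, b / a]`, the same holds for `r`, and then
`a * M(1, r) = M(a, a r) ≤ M(a, b) = M(b, a) ≤ M(b, b r) = b * M(1, r)`.
-/

open Set

lemma rpow_mem_Icc_inv_self {ρ s t : ℝ} (hρ : 1 ≤ ρ) (hs : s ∈ Icc ρ⁻¹ ρ) (ht₀ : 0 ≤ t)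
    (ht₁ : t ≤ 1) : s ^ t ∈ Icc ρ⁻¹ ρ := by
  have hρinv : 0 ≤ ρ⁻¹ := inv_nonneg.2 (zero_le_one.trans hρ)
  constructor
  · calc ρ⁻¹ ≤ ρ⁻¹ ^ t := Real.self_le_rpow_of_le_one hρinv (inv_le_one_of_one_le₀ hρ) ht₁
      _ ≤ s ^ t := Real.rpow_le_rpow hρinv hs.1 ht₀
  · calc s ^ t ≤ ρ ^ t := Real.rpow_le_rpow (hρinv.trans hs.1) hs.2 ht₀
      _ ≤ ρ := Real.rpow_le_self_of_one_le hρ ht₁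

lemma div_rpow_mem_Icc {a b c d t : ℝ} (ha : 0 < a) (hc : c ∈ Icc a b) (hd : d ∈ Icc a b)
    (ht₀ : 0 ≤ t) (ht₁ : t ≤ 1) : (d / c) ^ t ∈ Icc (a / b) (b / a) := by
  have hab : a ≤ b := hc.1.trans hc.2
  have hb : 0 < b := ha.trans_le hab
  rw [← inv_div b a]
  refine rpow_mem_Icc_inv_self ((one_le_div ha).2 hab) ⟨?_, ?_⟩ ht₀ ht₁
  · rw [inv_div]
    exact div_le_div₀ (ha.trans_le hd.1).le hd.1 (ha.trans_le hc.1) hc.2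
  · exact div_le_div₀ hb.le hd.2 ha hc.1

section HomogeneousMean

variable {M : ℝ → ℝ → ℝ}

lemma apply_min_max (hsym : ∀ x y : ℝ, 0 < x → 0 < y → M x y = M y x) {x y : ℝ}
    (hx : 0 < x) (hy : 0 < y) : M (min x y) (max x y) = M x y := by
  rcases le_total x y with h | h
  · rw [min_eq_left h, max_eq_right h]
  · rw [min_eq_right h, max_eq_left h, hsym x y hx hy]

lemma mul_apply_one_le_and_le_mul
    (hsym : ∀ x y : ℝ, 0 < x → 0 < y → M x y = M y x)
    (hhom : ∀ l x y : ℝ, 0 < l → 0 < x → 0 < y → M (l * x) (l * y) = l * M x y)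
    (hmono : ∀ x₁ y₁ x₂ y₂ : ℝ, 0 < x₁ → 0 < y₁ → x₁ ≤ x₂ → y₁ ≤ y₂ → M x₁ y₁ ≤ M x₂ y₂)
    {a b r : ℝ} (ha : 0 < a) (hb : 0 < b) (hr : r ∈ Icc (a / b) (b / a)) :
    a * M 1 r ≤ M a b ∧ M a b ≤ b * M 1 r := by
  have hr₀ : 0 < r := (div_pos ha hb).trans_le hr.1
  constructor
  · calc a * M 1 r = M a (a * r) := by rw [← hhom a 1 r ha one_pos hr₀, mul_one]
      _ ≤ M a b := hmono _ _ _ _ ha (mul_pos ha hr₀) le_rfl ((le_div_iff₀' ha).1 hr.2)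
  · calc M a b = M b a := hsym a b ha hb
      _ ≤ M b (b * r) := hmono _ _ _ _ hb ha le_rfl ((div_le_iff₀' hb).1 hr.1)
      _ = b * M 1 r := by rw [← hhom b 1 r hb one_pos hr₀, mul_one]

lemma rpow_mul_div_apply_mem_Icc
    (hsym : ∀ x y : ℝ, 0 < x → 0 < y → M x y = M y x)
    (hhom : ∀ l x y : ℝ, 0 < l → 0 < x → 0 < y → M (l * x) (l * y) = l * M x y)
    (hmono : ∀ x₁ y₁ x₂ y₂ : ℝ, 0 < x₁ → 0 < y₁ → x₁ ≤ x₂ → y₁ ≤ y₂ → M x₁ y₁ ≤ M x₂ y₂)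
    {a b c d t : ℝ} (ha : 0 < a) (hc : c ∈ Icc a b) (hd : d ∈ Icc a b) (ht₀ : 0 ≤ t)
    (ht₁ : t ≤ 1) (hE : 0 < M (c ^ t) (d ^ t)) :
    c ^ t * (M a b / M (c ^ t) (d ^ t)) ∈ Icc a b := by
  have hb : 0 < b := ha.trans_le (hc.1.trans hc.2)
  have hc₀ : 0 < c := ha.trans_le hc.1
  have hct : 0 < c ^ t := Real.rpow_pos_of_pos hc₀ t
  have hr := div_rpow_mem_Icc ha hc hd ht₀ ht₁
  have hfactor : M (c ^ t) (d ^ t) = c ^ t * M 1 ((d / c) ^ t) := by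
    rw [← hhom _ _ _ hct one_pos ((div_pos ha hb).trans_le hr.1), mul_one,
      Real.div_rpow (ha.trans_le hd.1).le hc₀.le, mul_div_cancel₀ _ hct.ne']
  rw [hfactor] at hE ⊢
  have hp := pos_of_mul_pos_right hE hct.le
  rw [← mul_div_assoc, mul_div_mul_left _ _ hct.ne', mem_Icc, le_div_iff₀ hp, div_le_iff₀ hp]
  exact mul_apply_one_le_and_le_mul hsym hhom hmono ha hb hr

end HomogeneousMean

theorem main_invariance (M C D : ℝ → ℝ → ℝ)
    (hM : ∀ x y : ℝ, 0 < x → 0 < y → min x y ≤ M x y ∧ M x y ≤ max x y)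
    (hsym : ∀ x y : ℝ, 0 < x → 0 < y → M x y = M y x)
    (hhom : ∀ l x y : ℝ, 0 < l → 0 < x → 0 < y → M (l * x) (l * y) = l * M x y)
    (hmono : ∀ x₁ y₁ x₂ y₂ : ℝ, 0 < x₁ → 0 < y₁ → x₁ ≤ x₂ → y₁ ≤ y₂ → M x₁ y₁ ≤ M x₂ y₂)
    (hC : ∀ x y : ℝ, 0 < x → 0 < y → min x y ≤ C x y ∧ C x y ≤ max x y)
    (hD : ∀ x y : ℝ, 0 < x → 0 < y → min x y ≤ D x y ∧ D x y ≤ max x y)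
    (t : ℝ) (ht : t ∈ Set.Ioo (0 : ℝ) 1)
    (N K L : ℝ → ℝ → ℝ)
    (hN : ∀ x y : ℝ, N x y = (M x y / M ((C x y) ^ t) ((D x y) ^ t)) ^ (1 / (1 - t)))
    (hK : ∀ x y : ℝ, K x y = (C x y) ^ t * (N x y) ^ (1 - t))
    (hL : ∀ x y : ℝ, L x y = (D x y) ^ t * (N x y) ^ (1 - t)) :
    (∀ x y : ℝ, 0 < x → 0 < y →
        min x y ≤ K x y ∧ K x y ≤ max x y ∧ min x y ≤ L x y ∧ L x y ≤ max x y) ∧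
    (∀ x y : ℝ, 0 < x → 0 < y → M (K x y) (L x y) = M x y) := by
  obtain ⟨ht₀, ht₁⟩ := ht
  have hpos : ∀ u v : ℝ, 0 < u → 0 < v → 0 < M u v := fun u v hu hv =>
    (lt_min hu hv).trans_le (hM u v hu hv).1
  have hpoint : ∀ x y : ℝ, 0 < x → 0 < y →
      (min x y ≤ K x y ∧ K x y ≤ max x y ∧ min x y ≤ L x y ∧ L x y ≤ max x y) ∧
        M (K x y) (L x y) = M x y := by
    intro x y hx hy
    have ha : 0 < min x y := lt_min hx hy
    have hct : 0 < C x y ^ t := Real.rpow_pos_of_pos (ha.trans_le (hC x y hx hy).1) t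
    have hdt : 0 < D x y ^ t := Real.rpow_pos_of_pos (ha.trans_le (hD x y hx hy).1) t
    have hE := hpos _ _ hct hdt
    have hq := div_pos (hpos _ _ ha (ha.trans_le min_le_max)) hE
    rw [hK, hL, hN, ← apply_min_max hsym hx hy, one_div,
      Real.rpow_inv_rpow hq.le (sub_pos.2 ht₁).ne']
    have hKmem := rpow_mul_div_apply_mem_Icc hsym hhom hmono ha (hC x y hx hy) (hD x y hx hy)
      ht₀.le ht₁.le hE
    have hLmem := rpow_mul_div_apply_mem_Icc hsym hhom hmono ha (hD x y hx hy) (hC x y hx hy)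
      ht₀.le ht₁.le (hsym _ _ hct hdt ▸ hE)
    rw [hsym _ _ hdt hct] at hLmem
    refine ⟨⟨hKmem.1, hKmem.2, hLmem.1, hLmem.2⟩, ?_⟩
    rw [mul_comm (C x y ^ t), mul_comm (D x y ^ t), hhom _ _ _ hq hct hdt,
      div_mul_cancel₀ _ hE.ne']
  exact ⟨fun x y hx hy => (hpoint x y hx hy).1, fun x y hx hy => (hpoint x y hx hy).2⟩
end

section
/- Let n > 2, t ∈ (0,1), and on ℝ₊ⁿ let A denote the arithmetic mean and G the geometric mean. Then the function K_t = A^t · A / A(A^t, G^t, …, G^t) satisfies lim_{x→∞} K_t(1,x,…,x)/x = n-1 > 1; hence K_t is not a mean. -/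
open Filter Real

theorem n_variable_counterexample (n : ℕ) (hn : 2 < n)
    (t : ℝ) (ht : t ∈ Set.Ioo (0 : ℝ) 1)
    (Am Gm : (Fin n → ℝ) → ℝ)
    (hAm : ∀ v : Fin n → ℝ, Am v = (∑ i, v i) / n)
    (hGm : ∀ v : Fin n → ℝ, Gm v = (∏ i, v i) ^ ((1 : ℝ) / n))
    (tup : ℝ → Fin n → ℝ)
    (htup : ∀ (x : ℝ) (i : Fin n), tup x i = if (i : ℕ) = 0 then 1 else x)
    (K : ℝ → ℝ)
    (hK : ∀ x : ℝ, K x = (Am (tup x)) ^ t *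
      (Am (tup x) /
        Am (fun i => if (i : ℕ) = 0 then (Am (tup x)) ^ t else (Gm (tup x)) ^ t))) :
    Filter.Tendsto (fun x => K x / x) Filter.atTop (nhds ((n : ℝ) - 1)) ∧
    (1 : ℝ) < (n : ℝ) - 1 ∧
    ∃ x : ℝ, 1 < x ∧ K x > x := by
  obtain ⟨ht0, ht1⟩ := ht
  have hn0 : 0 < n := by omega
  haveI : NeZero n := ⟨hn0.ne'⟩
  have hn2 : (2:ℝ) < (n:ℝ) := by exact_mod_cast hn
  have hn1 : (1:ℝ) < (n:ℝ) - 1 := by linarith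
  have hnR : (0:ℝ) < (n:ℝ) := by positivity
  -- sum computation
  have hsum : ∀ c d : ℝ, (∑ i : Fin n, (if (i:ℕ) = 0 then c else d)) = c + ((n:ℝ)-1)*d := by
    intro c d
    have hcongr : ∀ i : Fin n, (if (i:ℕ) = 0 then c else d)
        = (if i = 0 then c - d else 0) + d := by
      intro i
      by_cases h : i = 0
      · simp [h]
      · have h' : (i:ℕ) ≠ 0 := fun hh => h (Fin.ext (by simp [hh]))
        simp [h, h']
    rw [Finset.sum_congr rfl (fun i _ => hcongr i), Finset.sum_add_distrib,
      Finset.sum_ite_eq' Finset.univ (0 : Fin n) (fun _ => c - d)]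
    simp
    ring
  -- product computation
  have hprodx : ∀ x : ℝ, (∏ i : Fin n, (if (i:ℕ) = 0 then (1:ℝ) else x)) = x^(n-1) := by
    intro x
    rw [← Finset.mul_prod_erase Finset.univ _ (Finset.mem_univ (0 : Fin n))]
    have h0 : ((0 : Fin n) : ℕ) = 0 := rfl
    rw [if_pos h0, one_mul]
    rw [Finset.prod_congr rfl (fun i hi => ?_), Finset.prod_const,
      Finset.card_erase_of_mem (Finset.mem_univ _), Finset.card_univ, Fintype.card_fin]
    have h1 : i ≠ 0 := (Finset.mem_erase.mp hi).1
    have h2 : (i:ℕ) ≠ 0 := fun hh => h1 (Fin.ext (by simp [hh]))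
    simp [h2]
  set a : ℝ → ℝ := fun x => (1 + ((n:ℝ)-1)*x)/n with ha
  set g : ℝ → ℝ := fun x => x ^ (((n:ℝ)-1)/(n:ℝ)) with hg
  have hAmv : ∀ x : ℝ, Am (tup x) = a x := by
    intro x
    rw [hAm]
    have : (∑ i, tup x i) = ∑ i : Fin n, (if (i:ℕ) = 0 then (1:ℝ) else x) :=
      Finset.sum_congr rfl (fun i _ => htup x i)
    rw [this, hsum]
  have hGmv : ∀ x : ℝ, 0 < x → Gm (tup x) = g x := by
    intro x hx
    rw [hGm]
    have : (∏ i, tup x i) = ∏ i : Fin n, (if (i:ℕ) = 0 then (1:ℝ) else x) :=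
      Finset.prod_congr rfl (fun i _ => htup x i)
    rw [this, hprodx, ← Real.rpow_natCast x (n-1), ← Real.rpow_mul hx.le]
    congr 1
    have : ((n - 1 : ℕ) : ℝ) = (n:ℝ) - 1 := by
      have := Nat.cast_sub (by omega : 1 ≤ n) (R := ℝ)
      simpa using this
    rw [this]; ring
  have hapos : ∀ x : ℝ, 0 < x → 0 < a x := by
    intro x hx
    have : (0:ℝ) < 1 + ((n:ℝ)-1)*x := by nlinarith
    positivity
  have hgpos : ∀ x : ℝ, 0 < x → 0 < g x := fun x hx => Real.rpow_pos_of_pos hx _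
  -- the simplified form
  set F : ℝ → ℝ := fun x => (a x / x) * ((n:ℝ) / (1 + ((n:ℝ)-1) * (g x / a x)^t)) with hF
  have hKF : ∀ x : ℝ, 0 < x → K x / x = F x := by
    intro x hx
    have hax := hapos x hx
    have hgx := hgpos x hx
    have hinner : Am (fun i => if (i:ℕ) = 0 then (Am (tup x)) ^ t else (Gm (tup x)) ^ t)
        = ((a x)^t + ((n:ℝ)-1) * (g x)^t)/n := by
      rw [hAm, hsum, hAmv, hGmv x hx]
    rw [hK, hinner, hAmv]
    have hat : (0:ℝ) < (a x)^t := Real.rpow_pos_of_pos hax _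
    have hgt : (0:ℝ) < (g x)^t := Real.rpow_pos_of_pos hgx _
    have hden : (0:ℝ) < (a x)^t + ((n:ℝ)-1) * (g x)^t := by nlinarith
    have hden2 : (0:ℝ) < 1 + ((n:ℝ)-1) * (g x / a x)^t := by
      have : (0:ℝ) < (g x / a x)^t := Real.rpow_pos_of_pos (by positivity) _
      nlinarith
    simp only [hF]
    rw [Real.div_rpow hgx.le hax.le]
    field_simp
  -- limits
  have hax_lim : Tendsto (fun x => a x / x) atTop (nhds (((n:ℝ)-1)/n)) := by
    have h1 : Tendsto (fun x : ℝ => 1/((n:ℝ)*x) + ((n:ℝ)-1)/n) atTop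
        (nhds (0 + ((n:ℝ)-1)/n)) := by
      refine Tendsto.add ?_ tendsto_const_nhds
      simp only [one_div]
      exact (tendsto_inv_atTop_zero.comp (Tendsto.const_mul_atTop hnR tendsto_id))
    rw [zero_add] at h1
    refine h1.congr' ?_
    filter_upwards [eventually_gt_atTop (0:ℝ)] with x hx
    rw [ha]
    field_simp
  have hga_lim : Tendsto (fun x => g x / a x) atTop (nhds 0) := by
    have hnum : Tendsto (fun x : ℝ => g x / x) atTop (nhds 0) := by
      have h1 : Tendsto (fun x : ℝ => x ^ (-(1/(n:ℝ)))) atTop (nhds 0) :=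
        tendsto_rpow_neg_atTop (by positivity)
      refine h1.congr' ?_
      filter_upwards [eventually_gt_atTop (0:ℝ)] with x hx
      rw [hg]
      rw [show -(1/(n:ℝ)) = ((n:ℝ)-1)/(n:ℝ) - 1 by field_simp; ring,
        Real.rpow_sub hx, Real.rpow_one]
    have hden_ne : (((n:ℝ)-1)/n) ≠ 0 := by
      have : (0:ℝ) < ((n:ℝ)-1)/n := by
        apply div_pos <;> linarith
      exact this.ne'
    have h2 : Tendsto (fun x => (g x / x) / (a x / x)) atTop (nhds (0 / (((n:ℝ)-1)/n))) :=
      hnum.div hax_lim hden_ne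
    rw [zero_div] at h2
    refine h2.congr' ?_
    filter_upwards [eventually_gt_atTop (0:ℝ)] with x hx
    have hax := (hapos x hx).ne'
    field_simp
  have hgat_lim : Tendsto (fun x => (g x / a x)^t) atTop (nhds 0) := by
    have := hga_lim.rpow_const (Or.inr ht0.le)
    rwa [Real.zero_rpow ht0.ne'] at this
  have hF_lim : Tendsto F atTop (nhds ((n:ℝ) - 1)) := by
    have hmain : Tendsto F atTop
        (nhds ((((n:ℝ)-1)/n) * ((n:ℝ) / (1 + ((n:ℝ)-1) * 0)))) := by
      refine hax_lim.mul (Tendsto.div tendsto_const_nhds ?_ (by norm_num))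
      exact (tendsto_const_nhds.mul hgat_lim).const_add 1
    have : (((n:ℝ)-1)/n) * ((n:ℝ) / (1 + ((n:ℝ)-1) * 0)) = (n:ℝ) - 1 := by
      field_simp
      ring
    rwa [this] at hmain
  have hmain : Tendsto (fun x => K x / x) atTop (nhds ((n:ℝ) - 1)) := by
    refine hF_lim.congr' ?_
    filter_upwards [eventually_gt_atTop (0:ℝ)] with x hx
    exact (hKF x hx).symm
  refine ⟨hmain, hn1, ?_⟩
  have hev : ∀ᶠ x in atTop, (1:ℝ) < K x / x := hmain.eventually (eventually_gt_nhds hn1)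
  obtain ⟨x, hx1, hx2⟩ := (hev.and (eventually_gt_atTop (1:ℝ))).exists
  refine ⟨x, hx2, ?_⟩
  have hx0 : (0:ℝ) < x := by linarith
  calc x = 1 * x := (one_mul x).symm
    _ < (K x / x) * x := by exact mul_lt_mul_of_pos_right hx1 hx0
    _ = K x := by field_simp
end

section
/- Let N : ℝ² → ℝ be a monotone, translative, symmetric mean and, for t ∈ (-1,1), define N_t(x,y) = (N(x,y) - N(tx,ty))/(1-t). Then K_t(x,y) = t·x + (1-t)·N_t(x,y) and L_t(x,y) = t·y + (1-t)·N_t(x,y) are translative means satisfying N(K_t(x,y), L_t(x,y)) = N(x,y) for all x, y ∈ ℝ. -/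
/-!
A translative `N` is determined by its section `φ d = N 0 d` through `N x y = x + φ (y - x)`,
and symmetry gives `φ (-d) = φ d - d`. Hence `K x y = x + (φ d - φ (t d))` with `d = y - x`, and
by monotonicity of `φ` the increment `φ d - φ (t d)` lies between `0` and `d` as soon as
`|t| ≤ 1`. Finally `K` and `L` are the translates of `t x` and `t y` by
`N x y - N (t x) (t y)`, so translativity gives `N (K x y) (L x y) = N x y`.
-/

section Translative

variable {N : ℝ → ℝ → ℝ} (htrans : ∀ τ x y : ℝ, N (x + τ) (y + τ) = N x y + τ)
include htrans

lemma apply_eq_add_apply_zero_sub (x y : ℝ) : N x y = x + N 0 (y - x) := by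
  simpa [add_comm] using htrans x 0 (y - x)

lemma sub_apply_mul_eq (t x y : ℝ) :
    N x y - N (t * x) (t * y) = (1 - t) * x + (N 0 (y - x) - N 0 (t * (y - x))) := by
  rw [apply_eq_add_apply_zero_sub htrans x y, apply_eq_add_apply_zero_sub htrans (t * x),
    ← mul_sub]
  ring

lemma apply_zero_neg (hsym : ∀ x y : ℝ, N x y = N y x) (d : ℝ) : N 0 (-d) = N 0 d - d := by
  have h := htrans (-d) 0 d
  rw [zero_add, add_neg_cancel, hsym] at h
  linarith

lemma apply_zero_sub_apply_zero_mul_mem_Icc (hsym : ∀ x y : ℝ, N x y = N y x)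
    (hmono : ∀ x₁ y₁ x₂ y₂ : ℝ, x₁ ≤ x₂ → y₁ ≤ y₂ → N x₁ y₁ ≤ N x₂ y₂)
    {t : ℝ} (ht : t ∈ Set.Icc (-1 : ℝ) 1) (d : ℝ) :
    N 0 d - N 0 (t * d) ∈ Set.Icc (min 0 d) (max 0 d) := by
  obtain ⟨ht₁, ht₂⟩ := ht
  have hneg := apply_zero_neg htrans hsym d
  have hφ {u v : ℝ} (h : u ≤ v) : N 0 u ≤ N 0 v := hmono _ _ _ _ le_rfl h
  rcases le_total 0 d with hd | hd
  · have h₁ := hφ (show t * d ≤ d by nlinarith)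
    have h₂ := hφ (show -d ≤ t * d by nlinarith)
    rw [min_eq_left hd, max_eq_right hd]
    exact ⟨by linarith, by linarith⟩
  · have h₁ := hφ (show d ≤ t * d by nlinarith)
    have h₂ := hφ (show t * d ≤ -d by nlinarith)
    rw [min_eq_right hd, max_eq_left hd]
    exact ⟨by linarith, by linarith⟩

end Translative

lemma min_le_add_and_add_le_max_of_mem_Icc {x y g : ℝ}
    (h : g ∈ Set.Icc (min 0 (y - x)) (max 0 (y - x))) :
    min x y ≤ x + g ∧ x + g ≤ max x y := by
  have hmin : x + min 0 (y - x) = min x y := by rw [← min_add_add_left]; simp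
  have hmax : x + max 0 (y - x) = max x y := by rw [← max_add_add_left]; simp
  constructor <;> linarith [h.1, h.2]

theorem translative_invariance_general (N : ℝ → ℝ → ℝ)
    (htrans : ∀ τ x y : ℝ, N (x + τ) (y + τ) = N x y + τ)
    (hsym : ∀ x y : ℝ, N x y = N y x)
    (hmono : ∀ x₁ y₁ x₂ y₂ : ℝ, x₁ ≤ x₂ → y₁ ≤ y₂ → N x₁ y₁ ≤ N x₂ y₂)
    (t : ℝ) (ht : t ∈ Set.Ioo (-1 : ℝ) 1)
    (Nt K L : ℝ → ℝ → ℝ)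
    (hNt : ∀ x y : ℝ, Nt x y = (N x y - N (t * x) (t * y)) / (1 - t))
    (hK : ∀ x y : ℝ, K x y = t * x + (1 - t) * Nt x y)
    (hL : ∀ x y : ℝ, L x y = t * y + (1 - t) * Nt x y) :
    (∀ x y : ℝ, min x y ≤ K x y ∧ K x y ≤ max x y ∧ min x y ≤ L x y ∧ L x y ≤ max x y) ∧
    (∀ τ x y : ℝ, K (x + τ) (y + τ) = K x y + τ ∧ L (x + τ) (y + τ) = L x y + τ) ∧
    (∀ x y : ℝ, N (K x y) (L x y) = N x y) := by
  have hNt' (x y : ℝ) : (1 - t) * Nt x y = N x y - N (t * x) (t * y) := by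
    rw [hNt, mul_div_cancel₀ _ (sub_ne_zero.2 ht.2.ne')]
  have hK' (x y : ℝ) : K x y = x + (N 0 (y - x) - N 0 (t * (y - x))) := by
    rw [hK, hNt', sub_apply_mul_eq htrans]; ring
  have hLK (x y : ℝ) : L x y = K y x := by
    rw [hL, hK, hNt', hNt', hsym x y, hsym (t * x)]
  have hKmean (x y : ℝ) : min x y ≤ K x y ∧ K x y ≤ max x y := by
    rw [hK']
    exact min_le_add_and_add_le_max_of_mem_Icc
      (apply_zero_sub_apply_zero_mul_mem_Icc htrans hsym hmono (Set.Ioo_subset_Icc_self ht) _)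
  refine ⟨fun x y => ?_, fun τ x y => ?_, fun x y => ?_⟩
  · have hKyx := hKmean y x
    rw [min_comm, max_comm] at hKyx
    rw [hLK]
    exact ⟨(hKmean x y).1, (hKmean x y).2, hKyx⟩
  · rw [hLK, hLK, hK', hK', hK', hK']
    simp only [add_sub_add_right_eq_sub]
    constructor <;> ring
  · rw [hK, hL, hNt', htrans]
    ring

theorem translative_invariance (N : ℝ → ℝ → ℝ)
    (hmean : ∀ x y : ℝ, min x y ≤ N x y ∧ N x y ≤ max x y)
    (htrans : ∀ τ x y : ℝ, N (x + τ) (y + τ) = N x y + τ)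
    (hsym : ∀ x y : ℝ, N x y = N y x)
    (hmono : ∀ x₁ y₁ x₂ y₂ : ℝ, x₁ ≤ x₂ → y₁ ≤ y₂ → N x₁ y₁ ≤ N x₂ y₂)
    (t : ℝ) (ht : t ∈ Set.Ioo (-1 : ℝ) 1)
    (Nt K L : ℝ → ℝ → ℝ)
    (hNt : ∀ x y : ℝ, Nt x y = (N x y - N (t * x) (t * y)) / (1 - t))
    (hK : ∀ x y : ℝ, K x y = t * x + (1 - t) * Nt x y)
    (hL : ∀ x y : ℝ, L x y = t * y + (1 - t) * Nt x y) :
    (∀ x y : ℝ, min x y ≤ K x y ∧ K x y ≤ max x y ∧ min x y ≤ L x y ∧ L x y ≤ max x y) ∧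
    (∀ τ x y : ℝ, K (x + τ) (y + τ) = K x y + τ ∧ L (x + τ) (y + τ) = L x y + τ) ∧
    (∀ x y : ℝ, N (K x y) (L x y) = N x y) :=
  translative_invariance_general N htrans hsym hmono t ht Nt K L hNt hK hL
end
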